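/- arXiv:2003.10774 — 5 statements merged into one kernel-verified Lean document; each statement's English description precedes it below -/
import Mathlib

section
/- Let D=(V,A) be a finite digraph and k a positive integer. If A can be partitioned into k branchings, then A can be partitioned into k branchings each of which has size ⌊|A|/k⌋ or ⌈|A|/k⌉. -/
open Finset
open scoped Classical Pointwise

variable {V : Type*}

/-- The indegree `d⁻_B(v)` of the vertex `v` with respect to the arc set `B`,
i.e. the number of arcs in `B` whose head is `v`. -/
noncomputable def inDeg (B : Finset (V × V)) (v : V) : ℕ :=
  (B.filter (fun a => a.2 = v)).card

/-- `B` is a branching of the digraph `D = (V, A)`: `B ⊆ A`, every vertex has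
indegree at most `1` in `B`, and the underlying undirected edge set of `B` is a
forest (equivalently, every nonempty `X ⊆ V` induces at most `|X| - 1` arcs of `B`). -/
def IsBranching (A B : Finset (V × V)) : Prop :=
  B ⊆ A ∧ (∀ v : V, inDeg B v ≤ 1) ∧
    ∀ X : Finset V, X.Nonempty →
      (B.filter (fun a => a.1 ∈ X ∧ a.2 ∈ X)).card ≤ X.card - 1

/-- `B` is a `b`-branching of the digraph `D = (V, A)`:
`B ⊆ A`, `d⁻_B(v) ≤ b(v)` for every vertex `v`, and
`|B[X]| ≤ b(X) - 1` for every nonempty `X ⊆ V`. -/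
def IsBBranching (A : Finset (V × V)) (b : V → ℕ) (B : Finset (V × V)) : Prop :=
  B ⊆ A ∧ (∀ v : V, inDeg B v ≤ b v) ∧
    ∀ X : Finset V, X.Nonempty →
      (B.filter (fun a => a.1 ∈ X ∧ a.2 ∈ X)).card ≤ (∑ v ∈ X, b v) - 1

/-- Reachability along the arcs of `A`. -/
def Reaches (A : Finset (V × V)) : V → V → Prop :=
  Relation.ReflTransGen (fun u v => (u, v) ∈ A)

/-- `X` is a source component of the digraph `D = (V, A)`: `X` is a strongly
connected component (the set of vertices mutually reachable with some vertex `v`)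
and no arc of `A` enters `X` from outside. -/
def IsSourceComponent (A : Finset (V × V)) (X : Finset V) : Prop :=
  (∃ v : V, ∀ u : V, u ∈ X ↔ Reaches A u v ∧ Reaches A v u) ∧
    ∀ a ∈ A, a.2 ∈ X → a.1 ∈ X

/-- `∂B`: the set of heads of arcs of `B`. -/
noncomputable def heads (B : Finset (V × V)) : Finset V := B.image Prod.snd

/-- `R(B) = V \ ∂B`: the set of root vertices of a branching `B`. -/
noncomputable def roots [Fintype V] (B : Finset (V × V)) : Finset V :=
  univ \ heads B

/-- The incidence vector in `ℝ^A` of an arc subset `B ⊆ A`. -/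
noncomputable def incVec (A : Finset (V × V)) (B : Finset (V × V)) :
    {a : V × V // a ∈ A} → ℝ :=
  fun a => if a.1 ∈ B then 1 else 0

-- auxiliary lemmas

lemma arcEq {B : Finset (V × V)} (hdeg : ∀ v, inDeg B v ≤ 1)
    {a b : V × V} (ha : a ∈ B) (hb : b ∈ B) (hab : a.2 = b.2) : a = b := by
  have h := hdeg a.2
  unfold inDeg at h
  exact Finset.card_le_one.mp h a (Finset.mem_filter.mpr ⟨ha, rfl⟩)
    b (Finset.mem_filter.mpr ⟨hb, hab.symm⟩)

lemma cardHeads {B : Finset (V × V)} (hdeg : ∀ v, inDeg B v ≤ 1) :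
    (heads B).card = B.card := by
  unfold heads
  exact Finset.card_image_of_injOn (fun a ha b hb hab => arcEq hdeg ha hb hab)

lemma mem_heads' {B : Finset (V × V)} {x : V} :
    x ∈ heads B ↔ ∃ a ∈ B, a.2 = x := by
  unfold heads; simp [Finset.mem_image]

lemma noCycle_of_branching [Fintype V] {A B : Finset (V × V)}
    (hB : IsBranching A B) : ∀ u v, (u, v) ∈ B → ¬ Reaches B v u := by
  classical
  obtain ⟨-, hdeg, hdens⟩ := hB
  intro u v huv hr
  set X : Finset V := Finset.univ.filter (fun x => Reaches B v x ∧ Reaches B x u) with hX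
  have hmemX : ∀ x, x ∈ X ↔ (Reaches B v x ∧ Reaches B x u) := by
    intro x; simp [hX]
  have hvX : v ∈ X := (hmemX v).mpr ⟨Relation.ReflTransGen.refl, hr⟩
  have huX : u ∈ X := (hmemX u).mpr ⟨hr, Relation.ReflTransGen.refl⟩
  set I := B.filter (fun a => a.1 ∈ X ∧ a.2 ∈ X) with hI
  have harc : ∀ x ∈ X, ∃ a ∈ I, a.2 = x := by
    intro x hx
    obtain ⟨hvx, hxu⟩ := (hmemX x).mp hx
    rcases Relation.ReflTransGen.cases_tail hvx with h | ⟨b, hvb, hbx⟩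
    · subst h
      exact ⟨(u, x), Finset.mem_filter.mpr ⟨huv, huX, hvX⟩, rfl⟩
    · have hbX : b ∈ X := (hmemX b).mpr ⟨hvb, Relation.ReflTransGen.head hbx hxu⟩
      exact ⟨(b, x), Finset.mem_filter.mpr ⟨hbx, hbX, hx⟩, rfl⟩
  have hcard : X.card ≤ I.card := by
    apply Finset.card_le_card_of_injOn
      (fun x => if h : ∃ a ∈ I, a.2 = x then h.choose else (x, x))
    · intro x hx
      have h := harc x hx
      simp only [dif_pos h]
      exact h.choose_spec.1
    · intro x hx y hy hxy
      have h1 := harc x (by simpa using hx); have h2 := harc y (by simpa using hy)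
      simp only [dif_pos h1, dif_pos h2] at hxy
      have e1 := h1.choose_spec.2; have e2 := h2.choose_spec.2
      rw [← e1, ← e2, hxy]
  have hXne : X.Nonempty := ⟨v, hvX⟩
  have h1 := hdens X hXne
  rw [← hI] at h1
  have hXpos : 1 ≤ X.card := Finset.card_pos.mpr hXne
  omega

lemma branching_of_noCycle [Fintype V] {A B : Finset (V × V)}
    (hsub : B ⊆ A) (hdeg : ∀ v, inDeg B v ≤ 1)
    (hnc : ∀ u v, (u, v) ∈ B → ¬ Reaches B v u) : IsBranching A B := by
  classical
  refine ⟨hsub, hdeg, ?_⟩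
  intro X hX
  by_contra hcon
  push_neg at hcon
  set I := B.filter (fun a => a.1 ∈ X ∧ a.2 ∈ X) with hI
  have hXpos : 1 ≤ X.card := Finset.card_pos.mpr hX
  have hXI : X.card ≤ I.card := by omega
  have himg : I.image Prod.snd = X := by
    apply Finset.eq_of_subset_of_card_le
    · intro x hx
      obtain ⟨a, ha, rfl⟩ := Finset.mem_image.mp hx
      exact (Finset.mem_filter.mp ha).2.2
    · rw [Finset.card_image_of_injOn]
      · exact hXI
      · intro a ha b hb hab
        have ha' : a ∈ I := by simpa using ha
        have hb' : b ∈ I := by simpa using hb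
        rw [hI] at ha' hb'
        exact arcEq hdeg (Finset.mem_filter.mp ha').1 (Finset.mem_filter.mp hb').1 hab
  set g : V → V := fun x => if h : ∃ a ∈ I, a.2 = x then h.choose.1 else x with hg
  have hgx : ∀ x ∈ X, (g x, x) ∈ I := by
    intro x hx
    have h : ∃ a ∈ I, a.2 = x := by
      obtain ⟨a, ha, h2⟩ := Finset.mem_image.mp (himg.symm ▸ hx)
      exact ⟨a, ha, h2⟩
    simp only [hg, dif_pos h]
    have h1 := h.choose_spec.1
    have h2 := h.choose_spec.2
    have he : h.choose = (h.choose.1, x) := Prod.ext rfl h2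
    rwa [he] at h1
  have hgX : ∀ x ∈ X, g x ∈ X := fun x hx => (Finset.mem_filter.mp (hgx x hx)).2.1
  obtain ⟨x0, hx0⟩ := hX
  have hiter : ∀ n, g^[n] x0 ∈ X := by
    intro n; induction n with
    | zero => simpa using hx0
    | succ n ih => rw [Function.iterate_succ_apply']; exact hgX _ ih
  have hstep : ∀ n, (g^[n+1] x0, g^[n] x0) ∈ B := by
    intro n
    rw [Function.iterate_succ_apply']
    exact (Finset.mem_filter.mp (hgx _ (hiter n))).1
  have hreach : ∀ m n, Reaches B (g^[m+n] x0) (g^[m] x0) := by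
    intro m n; induction n with
    | zero => exact Relation.ReflTransGen.refl
    | succ n ih => exact Relation.ReflTransGen.head (hstep (m+n)) ih
  have key : ∀ m n, m < n → g^[m] x0 = g^[n] x0 → False := by
    intro m n hlt heq
    have hr : Reaches B (g^[n] x0) (g^[m+1] x0) := by
      have h := hreach (m+1) (n - (m+1))
      have hn : m + 1 + (n - (m+1)) = n := by omega
      rwa [hn] at h
    rw [← heq] at hr
    exact hnc _ _ (hstep m) hr
  obtain ⟨m, n, hmn, heq⟩ := Finite.exists_ne_map_eq_of_infinite (fun n => g^[n] x0)
  rcases lt_or_gt_of_ne hmn with h | h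
  · exact key m n h heq
  · exact key n m h heq.symm

lemma root_unique {B : Finset (V × V)} (hdeg : ∀ v, inDeg B v ≤ 1)
    {x r r' : V} (h1 : Reaches B r x) (hr : r ∉ heads B) (hr' : r' ∉ heads B) :
    Reaches B r' x → r = r' := by
  induction h1 with
  | refl =>
    intro h2
    rcases Relation.ReflTransGen.cases_tail h2 with h | ⟨c, hrc, hcx⟩
    · exact h
    · exact absurd (mem_heads'.mpr ⟨(c, r), hcx, rfl⟩) hr
  | @tail b c hrb hbc ih =>
    intro h2
    rcases Relation.ReflTransGen.cases_tail h2 with h | ⟨d, hrd, hdc⟩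
    · subst h
      exact absurd (mem_heads'.mpr ⟨(b, c), hbc, rfl⟩) hr'
    · have he : (d, c) = (b, c) := arcEq hdeg hdc hbc rfl
      have hd : d = b := (Prod.mk.injEq _ _ _ _).mp he |>.1
      exact ih (hd ▸ hrd)

lemma pair_resplit [Fintype V] (A B1 B2 : Finset (V × V))
    (h1 : IsBranching A B1) (h2 : IsBranching A B2) (hd : Disjoint B1 B2)
    (hc : B2.card + 1 < B1.card) :
    ∃ C1 C2 : Finset (V × V), IsBranching A C1 ∧ IsBranching A C2 ∧
      Disjoint C1 C2 ∧ C1 ∪ C2 = B1 ∪ B2 ∧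
      C1.card + 1 = B1.card ∧ C2.card = B2.card + 1 := by
  classical
  have hnc1 := noCycle_of_branching h1
  have hnc2 := noCycle_of_branching h2
  obtain ⟨h1A, h1deg, h1dens⟩ := h1
  obtain ⟨h2A, h2deg, h2dens⟩ := h2
  set Z : Finset V := heads B1 \ heads B2 with hZ
  set Y : Finset V := heads B2 \ heads B1 with hY
  have hZY : Y.card < Z.card := by
    have e1 : (heads B1).card = B1.card := cardHeads h1deg
    have e2 : (heads B2).card = B2.card := cardHeads h2deg
    have c1 : Z.card + (heads B1 ∩ heads B2).card = (heads B1).card :=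
      Finset.card_sdiff_add_card_inter _ _
    have c2 : Y.card + (heads B2 ∩ heads B1).card = (heads B2).card :=
      Finset.card_sdiff_add_card_inter _ _
    rw [Finset.inter_comm] at c2
    omega
  -- find a good root ρ
  have hex : ∃ ρ ∈ Z, ∀ y ∈ Y, ¬ Reaches B2 ρ y := by
    by_contra hcon
    push_neg at hcon
    set f : V → V := fun ρ => if h : ∃ y ∈ Y, Reaches B2 ρ y then h.choose else ρ with hf
    have hfY : ∀ ρ ∈ Z, f ρ ∈ Y ∧ Reaches B2 ρ (f ρ) := by
      intro ρ hρ
      have h := hcon ρ hρ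
      simp only [hf, dif_pos h]
      exact ⟨h.choose_spec.1, h.choose_spec.2⟩
    have hinj : Z.card ≤ Y.card := by
      apply Finset.card_le_card_of_injOn f
      · intro ρ hρ; exact (hfY ρ hρ).1
      · intro ρ hρ ρ' hρ' hff
        have hρZ : ρ ∈ Z := by simpa using hρ
        have hρ'Z : ρ' ∈ Z := by simpa using hρ'
        have hr1 := (hfY ρ hρZ).2
        have hr2 := (hfY ρ' hρ'Z).2
        rw [hff] at hr1
        have hρh : ρ ∉ heads B2 := (Finset.mem_sdiff.mp hρZ).2
        have hρ'h : ρ' ∉ heads B2 := (Finset.mem_sdiff.mp hρ'Z).2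
        exact root_unique h2deg hr1 hρh hρ'h hr2
    omega
  obtain ⟨ρ, hρZ, hρY⟩ := hex
  have hρh1 : ρ ∈ heads B1 := (Finset.mem_sdiff.mp hρZ).1
  have hρh2 : ρ ∉ heads B2 := (Finset.mem_sdiff.mp hρZ).2
  set S : Finset V := Finset.univ.filter (fun x => Reaches B2 ρ x) with hS
  have hmemS : ∀ x, x ∈ S ↔ Reaches B2 ρ x := by intro x; simp [hS]
  have hρS : ρ ∈ S := (hmemS ρ).mpr Relation.ReflTransGen.refl
  -- closure properties
  have hSup : ∀ a ∈ B2, a.2 ∈ S → a.1 ∈ S := by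
    intro a ha haS
    have hr := (hmemS a.2).mp haS
    rcases Relation.ReflTransGen.cases_tail hr with h | ⟨b, hrb, hba⟩
    · exact absurd (mem_heads'.mpr ⟨a, ha, h⟩) hρh2
    · have he : (b, a.2) = a := arcEq h2deg hba ha rfl
      have : a.1 = b := by rw [← he]
      rw [this]
      exact (hmemS b).mpr hrb
  have hSdown : ∀ a ∈ B2, a.1 ∈ S → a.2 ∈ S := by
    intro a ha haS
    exact (hmemS a.2).mpr (((hmemS a.1).mp haS).tail (show ((a.1, a.2) ∈ B2) by simpa using ha))
  have hSheads2 : ∀ x ∈ S, x ≠ ρ → x ∈ heads B2 := by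
    intro x hx hne
    rcases Relation.ReflTransGen.cases_tail ((hmemS x).mp hx) with h | ⟨b, hrb, hbx⟩
    · exact absurd h hne
    · exact mem_heads'.mpr ⟨(b, x), hbx, rfl⟩
  have hSheads1 : ∀ x ∈ S, x ∈ heads B1 := by
    intro x hx
    by_cases hne : x = ρ
    · rw [hne]; exact hρh1
    · have hx2 : x ∈ heads B2 := hSheads2 x hx hne
      by_contra hx1
      have hxY : x ∈ Y := Finset.mem_sdiff.mpr ⟨hx2, hx1⟩
      exact hρY x hxY ((hmemS x).mp hx)
  -- counting
  have n1S : (B1.filter (fun a => a.2 ∈ S)).card = S.card := by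
    have himg : (B1.filter (fun a => a.2 ∈ S)).image Prod.snd = S := by
      ext x
      constructor
      · intro hx
        obtain ⟨a, ha, rfl⟩ := Finset.mem_image.mp hx
        exact (Finset.mem_filter.mp ha).2
      · intro hx
        obtain ⟨a, ha, hax⟩ := mem_heads'.mp (hSheads1 x hx)
        exact Finset.mem_image.mpr ⟨a, Finset.mem_filter.mpr ⟨ha, hax ▸ hx⟩, hax⟩
    have hinj : ((B1.filter (fun a => a.2 ∈ S)).image Prod.snd).card
        = (B1.filter (fun a => a.2 ∈ S)).card := by
      apply Finset.card_image_of_injOn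
      intro a ha b hb hab
      rw [Finset.mem_coe, Finset.mem_filter] at ha hb
      exact arcEq h1deg ha.1 hb.1 hab
    rw [himg] at hinj
    exact hinj.symm
  have n2S : (B2.filter (fun a => a.2 ∈ S)).card + 1 = S.card := by
    have himg : (B2.filter (fun a => a.2 ∈ S)).image Prod.snd = S.erase ρ := by
      ext x
      constructor
      · intro hx
        obtain ⟨a, ha, rfl⟩ := Finset.mem_image.mp hx
        obtain ⟨haB, haS⟩ := Finset.mem_filter.mp ha
        refine Finset.mem_erase.mpr ⟨?_, haS⟩
        intro h
        exact hρh2 (mem_heads'.mpr ⟨a, haB, h⟩)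
      · intro hx
        obtain ⟨hne, hxS⟩ := Finset.mem_erase.mp hx
        obtain ⟨a, ha, hax⟩ := mem_heads'.mp (hSheads2 x hxS hne)
        exact Finset.mem_image.mpr ⟨a, Finset.mem_filter.mpr ⟨ha, hax ▸ hxS⟩, hax⟩
    have hcard2 : (B2.filter (fun a => a.2 ∈ S)).card = (S.erase ρ).card := by
      have hinj : ((B2.filter (fun a => a.2 ∈ S)).image Prod.snd).card
          = (B2.filter (fun a => a.2 ∈ S)).card := by
        apply Finset.card_image_of_injOn
        intro a ha b hb hab
        rw [Finset.mem_coe, Finset.mem_filter] at ha hb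
        exact arcEq h2deg ha.1 hb.1 hab
      rw [himg] at hinj
      exact hinj.symm
    have := Finset.card_erase_of_mem hρS
    have hSpos : 1 ≤ S.card := Finset.card_pos.mpr ⟨ρ, hρS⟩
    omega
  set C1 : Finset (V × V) := B1.filter (fun a => ¬ a.2 ∈ S) ∪ B2.filter (fun a => a.2 ∈ S) with hC1
  set C2 : Finset (V × V) := B2.filter (fun a => ¬ a.2 ∈ S) ∪ B1.filter (fun a => a.2 ∈ S) with hC2
  have memC1 : ∀ a : V × V, a ∈ C1 ↔ ((a ∈ B1 ∧ a.2 ∉ S) ∨ (a ∈ B2 ∧ a.2 ∈ S)) := by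
    intro a; simp [hC1, Finset.mem_union, Finset.mem_filter]
  have memC2 : ∀ a : V × V, a ∈ C2 ↔ ((a ∈ B2 ∧ a.2 ∉ S) ∨ (a ∈ B1 ∧ a.2 ∈ S)) := by
    intro a; simp [hC2, Finset.mem_union, Finset.mem_filter]
  have hdBB := Finset.disjoint_left.mp hd
  have hdisjC : Disjoint C1 C2 := by
    rw [Finset.disjoint_left]
    intro a ha1 ha2
    rcases (memC1 a).mp ha1 with ⟨hB, hS1⟩ | ⟨hB, hS1⟩ <;>
      rcases (memC2 a).mp ha2 with ⟨hB', hS2⟩ | ⟨hB', hS2⟩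
    · exact hdBB hB hB'
    · exact hS1 hS2
    · exact hS2 hS1
    · exact hdBB hB' hB
  have hunionC : C1 ∪ C2 = B1 ∪ B2 := by
    ext a
    simp only [Finset.mem_union]
    rw [memC1, memC2]
    by_cases h : a.2 ∈ S <;> tauto
  -- cards
  have hdisj1 : Disjoint (B1.filter (fun a => ¬ a.2 ∈ S)) (B2.filter (fun a => a.2 ∈ S)) := by
    rw [Finset.disjoint_left]
    intro a ha hb
    exact hdBB (Finset.mem_filter.mp ha).1 (Finset.mem_filter.mp hb).1
  have hdisj2 : Disjoint (B2.filter (fun a => ¬ a.2 ∈ S)) (B1.filter (fun a => a.2 ∈ S)) := by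
    rw [Finset.disjoint_left]
    intro a ha hb
    exact hdBB (Finset.mem_filter.mp hb).1 (Finset.mem_filter.mp ha).1
  have hsplit1 := Finset.card_filter_add_card_filter_not (s := B1) (p := fun a => a.2 ∈ S)
  have hsplit2 := Finset.card_filter_add_card_filter_not (s := B2) (p := fun a => a.2 ∈ S)
  have hcard1 : C1.card + 1 = B1.card := by
    rw [hC1, Finset.card_union_of_disjoint hdisj1]
    omega
  have hcard2 : C2.card = B2.card + 1 := by
    rw [hC2, Finset.card_union_of_disjoint hdisj2]
    omega
  -- indegree bounds
  have hdegC1 : ∀ v, inDeg C1 v ≤ 1 := by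
    intro v
    by_cases hv : v ∈ S
    · refine le_trans (Finset.card_le_card ?_) (h2deg v)
      intro a ha
      obtain ⟨haC, hav⟩ := Finset.mem_filter.mp ha
      rcases (memC1 a).mp haC with ⟨hB, hS1⟩ | ⟨hB, hS1⟩
      · exact absurd (hav ▸ hv) hS1
      · exact Finset.mem_filter.mpr ⟨hB, hav⟩
    · refine le_trans (Finset.card_le_card ?_) (h1deg v)
      intro a ha
      obtain ⟨haC, hav⟩ := Finset.mem_filter.mp ha
      rcases (memC1 a).mp haC with ⟨hB, hS1⟩ | ⟨hB, hS1⟩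
      · exact Finset.mem_filter.mpr ⟨hB, hav⟩
      · exact absurd (hav ▸ hS1) hv
  have hdegC2 : ∀ v, inDeg C2 v ≤ 1 := by
    intro v
    by_cases hv : v ∈ S
    · refine le_trans (Finset.card_le_card ?_) (h1deg v)
      intro a ha
      obtain ⟨haC, hav⟩ := Finset.mem_filter.mp ha
      rcases (memC2 a).mp haC with ⟨hB, hS1⟩ | ⟨hB, hS1⟩
      · exact absurd (hav ▸ hv) hS1
      · exact Finset.mem_filter.mpr ⟨hB, hav⟩
    · refine le_trans (Finset.card_le_card ?_) (h2deg v)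
      intro a ha
      obtain ⟨haC, hav⟩ := Finset.mem_filter.mp ha
      rcases (memC2 a).mp haC with ⟨hB, hS1⟩ | ⟨hB, hS1⟩
      · exact Finset.mem_filter.mpr ⟨hB, hav⟩
      · exact absurd (hav ▸ hS1) hv
  -- backward lemmas
  have back1 : ∀ x y, Reaches C1 x y →
      ((y ∈ S → x ∈ S ∧ Reaches B2 x y) ∧ (y ∉ S → (x ∈ S ∨ Reaches B1 x y))) := by
    intro x y h
    induction h with
    | refl =>
      exact ⟨fun h => ⟨h, Relation.ReflTransGen.refl⟩, fun _ => Or.inr Relation.ReflTransGen.refl⟩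
    | @tail b c hxb hbc ih =>
      have hbcC : (b, c) ∈ C1 := hbc
      constructor
      · intro hcS
        rcases (memC1 (b, c)).mp hbcC with ⟨hB, hSc⟩ | ⟨hB, hSc⟩
        · exact absurd hcS hSc
        · have hbS : b ∈ S := hSup (b, c) hB hSc
          obtain ⟨hxS, hr⟩ := ih.1 hbS
          exact ⟨hxS, hr.tail hB⟩
      · intro hcS
        rcases (memC1 (b, c)).mp hbcC with ⟨hB, hSc⟩ | ⟨hB, hSc⟩
        · by_cases hbS : b ∈ S
          · exact Or.inl (ih.1 hbS).1
          · rcases ih.2 hbS with h | h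
            · exact Or.inl h
            · exact Or.inr (h.tail hB)
        · exact absurd hSc hcS
  have back2 : ∀ x y, Reaches C2 x y →
      ((y ∉ S → x ∉ S ∧ Reaches B2 x y) ∧ (y ∈ S → (x ∉ S ∨ Reaches B1 x y))) := by
    intro x y h
    induction h with
    | refl =>
      exact ⟨fun h => ⟨h, Relation.ReflTransGen.refl⟩, fun _ => Or.inr Relation.ReflTransGen.refl⟩
    | @tail b c hxb hbc ih =>
      have hbcC : (b, c) ∈ C2 := hbc
      constructor
      · intro hcS
        rcases (memC2 (b, c)).mp hbcC with ⟨hB, hSc⟩ | ⟨hB, hSc⟩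
        · have hbS : b ∉ S := by
            intro hb
            exact hSc (hSdown (b, c) hB hb)
          obtain ⟨hxS, hr⟩ := ih.1 hbS
          exact ⟨hxS, hr.tail hB⟩
        · exact absurd hSc hcS
      · intro hcS
        rcases (memC2 (b, c)).mp hbcC with ⟨hB, hSc⟩ | ⟨hB, hSc⟩
        · exact absurd hcS hSc
        · by_cases hbS : b ∈ S
          · rcases ih.2 hbS with h | h
            · exact Or.inl h
            · exact Or.inr (h.tail hB)
          · exact Or.inl (ih.1 hbS).1
  -- no cycles
  have hncC1 : ∀ u v, (u, v) ∈ C1 → ¬ Reaches C1 v u := by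
    intro u v huv hr
    rcases (memC1 (u, v)).mp huv with ⟨hB, hvS⟩ | ⟨hB, hvS⟩
    · by_cases huS : u ∈ S
      · exact hvS ((back1 v u hr).1 huS).1
      · rcases (back1 v u hr).2 huS with h | h
        · exact hvS h
        · exact hnc1 u v hB h
    · have huS : u ∈ S := hSup (u, v) hB hvS
      obtain ⟨-, hr2⟩ := (back1 v u hr).1 huS
      exact hnc2 u v hB hr2
  have hncC2 : ∀ u v, (u, v) ∈ C2 → ¬ Reaches C2 v u := by
    intro u v huv hr
    rcases (memC2 (u, v)).mp huv with ⟨hB, hvS⟩ | ⟨hB, hvS⟩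
    · have huS : u ∉ S := by
        intro hu
        exact hvS (hSdown (u, v) hB hu)
      obtain ⟨-, hr2⟩ := (back2 v u hr).1 huS
      exact hnc2 u v hB hr2
    · by_cases huS : u ∈ S
      · rcases (back2 v u hr).2 huS with h | h
        · exact h hvS
        · exact hnc1 u v hB h
      · exact absurd hvS ((back2 v u hr).1 huS).1
  -- assemble
  have hsubC1 : C1 ⊆ A := by
    intro a ha
    rcases (memC1 a).mp ha with ⟨hB, -⟩ | ⟨hB, -⟩
    · exact h1A hB
    · exact h2A hB
  have hsubC2 : C2 ⊆ A := by
    intro a ha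
    rcases (memC2 a).mp ha with ⟨hB, -⟩ | ⟨hB, -⟩
    · exact h2A hB
    · exact h1A hB
  exact ⟨C1, C2, branching_of_noCycle hsubC1 hdegC1 hncC1,
    branching_of_noCycle hsubC2 hdegC2 hncC2, hdisjC, hunionC, hcard1, hcard2⟩

lemma arith_equitable {k : ℕ} (hk : 0 < k) (f : Fin k → ℕ)
    (hbal : ∀ i j, f i ≤ f j + 1) {m : ℕ} (hm : ∑ i, f i = m) :
    ∀ i, f i = m / k ∨ f i = (m + k - 1) / k := by
  intro i
  have hcard : (Finset.univ : Finset (Fin k)).card = k := by simp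
  by_cases hmin : ∀ j, f i ≤ f j
  · left
    have h1 : k * f i ≤ m := by
      rw [← hm]
      calc k * f i = ∑ _j : Fin k, f i := by rw [Finset.sum_const, hcard]; ring
        _ ≤ ∑ j, f j := Finset.sum_le_sum (fun j _ => hmin j)
    have h2 : m < k * (f i + 1) := by
      rw [← hm]
      calc ∑ j, f j < ∑ _j : Fin k, (f i + 1) := by
            apply Finset.sum_lt_sum
            · exact fun j _ => hbal j i
            · exact ⟨i, Finset.mem_univ i, by omega⟩
        _ = k * (f i + 1) := by rw [Finset.sum_const, hcard]; ring
    have lo : f i * k ≤ m := by rw [mul_comm]; exact h1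
    have hi' : m < (f i + 1) * k := by rw [mul_comm]; exact h2
    exact (Nat.div_eq_of_lt_le lo hi').symm
  · right
    push_neg at hmin
    obtain ⟨j, hj⟩ := hmin
    have hfi : f i = f j + 1 := le_antisymm (hbal i j) hj
    have h1 : k * f j < m := by
      rw [← hm]
      calc k * f j = ∑ _l : Fin k, f j := by rw [Finset.sum_const, hcard]; ring
        _ < ∑ l, f l := by
            apply Finset.sum_lt_sum
            · intro l _
              have := hbal i l
              omega
            · exact ⟨i, Finset.mem_univ i, by omega⟩
    have h2 : m < k * f i := by
      rw [← hm]
      calc ∑ l, f l < ∑ _l : Fin k, f i := by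
            apply Finset.sum_lt_sum
            · intro l _
              have := hbal l j
              omega
            · exact ⟨j, Finset.mem_univ j, by omega⟩
        _ = k * f i := by rw [Finset.sum_const, hcard]; ring
    have hki : k * f i = k * f j + k := by rw [hfi]; ring
    have lo : f i * k ≤ m + k - 1 := by
      rw [mul_comm]
      omega
    have hi : m + k - 1 < (f i + 1) * k := by
      have : (f i + 1) * k = k * f i + k := by ring
      omega
    exact (Nat.div_eq_of_lt_le lo hi).symm

lemma balance [Fintype V] (A : Finset (V × V)) (k : ℕ) :
    ∀ (N : ℕ) (B : Fin k → Finset (V × V)),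
      (∀ i, IsBranching A (B i)) →
      (∀ i j, i ≠ j → Disjoint (B i) (B j)) →
      Finset.univ.biUnion B = A →
      (∑ l, ((B l).card)^2) ≤ N →
      ∃ B' : Fin k → Finset (V × V),
        (∀ i, IsBranching A (B' i)) ∧
        (∀ i j, i ≠ j → Disjoint (B' i) (B' j)) ∧
        Finset.univ.biUnion B' = A ∧
        ∀ i j, (B' i).card ≤ (B' j).card + 1 := by
  intro N
  induction N with
  | zero =>
    intro B hbr hdis hun hsum
    refine ⟨B, hbr, hdis, hun, ?_⟩
    intro i j
    have h0 : ((B i).card)^2 ≤ 0 := le_trans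
      (Finset.single_le_sum (f := fun l => ((B l).card)^2) (fun l _ => Nat.zero_le _)
        (Finset.mem_univ i)) hsum
    have : (B i).card = 0 := by
      by_contra h
      have h1 : 1 ≤ (B i).card := Nat.one_le_iff_ne_zero.mpr h
      have : 1 ≤ ((B i).card)^2 := Nat.one_le_pow _ _ (by omega)
      omega
    omega
  | succ N ih =>
    intro B hbr hdis hun hsum
    by_cases hbal : ∀ i j, (B i).card ≤ (B j).card + 1
    · exact ⟨B, hbr, hdis, hun, hbal⟩
    · push_neg at hbal
      obtain ⟨i, j, hij⟩ := hbal
      have hne : i ≠ j := by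
        intro h; subst h; omega
      obtain ⟨C1, C2, hC1, hC2, hCd, hCu, hc1, hc2⟩ :=
        pair_resplit A (B i) (B j) (hbr i) (hbr j) (hdis i j hne) hij
      set B' : Fin k → Finset (V × V) :=
        Function.update (Function.update B i C1) j C2 with hB'
      have hB'i : B' i = C1 := by
        rw [hB', Function.update_of_ne hne, Function.update_self]
      have hB'j : B' j = C2 := by rw [hB', Function.update_self]
      have hB'other : ∀ l, l ≠ i → l ≠ j → B' l = B l := by
        intro l hl1 hl2
        rw [hB', Function.update_of_ne hl2, Function.update_of_ne hl1]
      have hsubC1 : C1 ⊆ B i ∪ B j := by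
        rw [← hCu]; exact Finset.subset_union_left
      have hsubC2 : C2 ⊆ B i ∪ B j := by
        rw [← hCu]; exact Finset.subset_union_right
      have hdisO : ∀ l, l ≠ i → l ≠ j → Disjoint (B l) (B i ∪ B j) := by
        intro l hl1 hl2
        exact Finset.disjoint_union_right.mpr ⟨hdis l i hl1, hdis l j hl2⟩
      have hdis' : ∀ l m, l ≠ m → Disjoint (B' l) (B' m) := by
        have key : ∀ l, l ≠ i → l ≠ j → Disjoint (B' l) C1 ∧ Disjoint (B' l) C2 := by
          intro l hl1 hl2
          rw [hB'other l hl1 hl2]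
          exact ⟨Finset.disjoint_of_subset_right hsubC1 (hdisO l hl1 hl2),
                 Finset.disjoint_of_subset_right hsubC2 (hdisO l hl1 hl2)⟩
        intro l m hlm
        by_cases hl1 : l = i
        · by_cases hm2 : m = j
          · rw [hl1, hm2, hB'i, hB'j]; exact hCd
          · have hm1 : m ≠ i := fun h => hlm (hl1.trans h.symm)
            rw [hl1, hB'i]
            exact ((key m hm1 hm2).1).symm
        · by_cases hl2 : l = j
          · by_cases hm1 : m = i
            · rw [hl2, hm1, hB'j, hB'i]; exact hCd.symm
            · have hm2 : m ≠ j := fun h => hlm (hl2.trans h.symm)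
              rw [hl2, hB'j]
              exact ((key m hm1 hm2).2).symm
          · by_cases hm1 : m = i
            · rw [hm1, hB'i]; exact (key l hl1 hl2).1
            · by_cases hm2 : m = j
              · rw [hm2, hB'j]; exact (key l hl1 hl2).2
              · rw [hB'other l hl1 hl2, hB'other m hm1 hm2]; exact hdis l m hlm
      have hun' : Finset.univ.biUnion B' = A := by
        rw [← hun]
        ext x
        simp only [Finset.mem_biUnion, Finset.mem_univ, true_and]
        constructor
        · rintro ⟨l, hl⟩
          by_cases hl1 : l = i
          · rw [hl1, hB'i] at hl
            rcases Finset.mem_union.mp (hsubC1 hl) with h | h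
            · exact ⟨i, h⟩
            · exact ⟨j, h⟩
          · by_cases hl2 : l = j
            · rw [hl2, hB'j] at hl
              rcases Finset.mem_union.mp (hsubC2 hl) with h | h
              · exact ⟨i, h⟩
              · exact ⟨j, h⟩
            · exact ⟨l, (hB'other l hl1 hl2) ▸ hl⟩
        · rintro ⟨l, hl⟩
          by_cases hl1 : l = i
          · have hx : x ∈ C1 ∪ C2 := by
              rw [hCu]
              exact Finset.mem_union_left _ (hl1 ▸ hl)
            rcases Finset.mem_union.mp hx with h | h
            · exact ⟨i, by rw [hB'i]; exact h⟩
            · exact ⟨j, by rw [hB'j]; exact h⟩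
          · by_cases hl2 : l = j
            · have hx : x ∈ C1 ∪ C2 := by
                rw [hCu]
                exact Finset.mem_union_right _ (hl2 ▸ hl)
              rcases Finset.mem_union.mp hx with h | h
              · exact ⟨i, by rw [hB'i]; exact h⟩
              · exact ⟨j, by rw [hB'j]; exact h⟩
            · exact ⟨l, by rw [hB'other l hl1 hl2]; exact hl⟩
      have hbr' : ∀ l, IsBranching A (B' l) := by
        intro l
        by_cases hl1 : l = i
        · rw [hl1, hB'i]; exact hC1
        · by_cases hl2 : l = j
          · rw [hl2, hB'j]; exact hC2
          · rw [hB'other l hl1 hl2]; exact hbr l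
      -- sum decrease
      have hdecomp : ∀ (f : Fin k → ℕ),
          ∑ l, f l = f i + (f j + ∑ l ∈ (Finset.univ.erase i).erase j, f l) := by
        intro f
        rw [Finset.add_sum_erase _ f (Finset.mem_erase.mpr ⟨(Ne.symm hne), Finset.mem_univ j⟩),
          Finset.add_sum_erase _ f (Finset.mem_univ i)]
      have hrest : ∑ l ∈ (Finset.univ.erase i).erase j, ((B' l).card)^2
          = ∑ l ∈ (Finset.univ.erase i).erase j, ((B l).card)^2 := by
        apply Finset.sum_congr rfl
        intro l hl
        obtain ⟨hl2, hl1, -⟩ : l ≠ j ∧ l ≠ i ∧ l ∈ Finset.univ := by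
          obtain ⟨h2, h3⟩ := Finset.mem_erase.mp hl
          obtain ⟨h1, h4⟩ := Finset.mem_erase.mp h3
          exact ⟨h2, h1, h4⟩
        rw [hB'other l hl1 hl2]
      have hΦ : (∑ l, ((B' l).card)^2) < ∑ l, ((B l).card)^2 := by
        rw [hdecomp (fun l => ((B' l).card)^2), hdecomp (fun l => ((B l).card)^2),
          hrest, hB'i, hB'j]
        have e1 : (B i).card = C1.card + 1 := hc1.symm
        have e2 : C2.card = (B j).card + 1 := hc2
        nlinarith [hij, e1, e2]
      exact ih B' hbr' hdis' hun' (by omega)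

/-- If the arc set of a finite digraph can be partitioned into
`k` branchings, then it can be partitioned into `k` branchings each of size
`⌊|A|/k⌋` or `⌈|A|/k⌉`. -/
theorem equitable_partition_into_branchings
    {V : Type*} [Fintype V] (A : Finset (V × V)) (k : ℕ) (hk : 0 < k)
    (h : ∃ B : Fin k → Finset (V × V),
      (∀ i, IsBranching A (B i)) ∧
      (∀ i j, i ≠ j → Disjoint (B i) (B j)) ∧
      Finset.univ.biUnion B = A) :
    ∃ B : Fin k → Finset (V × V),
      (∀ i, IsBranching A (B i)) ∧
      (∀ i j, i ≠ j → Disjoint (B i) (B j)) ∧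
      Finset.univ.biUnion B = A ∧
      ∀ i, (B i).card = A.card / k ∨ (B i).card = (A.card + k - 1) / k := by
  classical
  obtain ⟨B0, hbr0, hdis0, hun0⟩ := h
  obtain ⟨B, hbr, hdis, hun, hbal⟩ :=
    balance A k (∑ l, ((B0 l).card)^2) B0 hbr0 hdis0 hun0 le_rfl
  have hsum : ∑ l, (B l).card = A.card := by
    rw [← hun]
    exact (Finset.card_biUnion (fun i _ j _ hij => hdis i j hij)).symm
  exact ⟨B, hbr, hdis, hun, arith_equitable hk (fun l => (B l).card) hbal hsum⟩
end

section
/- Let G=(V,E,A) be a mixed graph, and define the family F_G ⊆ 2^V by F_G = { ∂F : F ⊆ E∪A is a matching forest in G }. Then the set system (V, F_G) is a delta-matroid; that is, for each U1, U2 ∈ F_G and each u ∈ U1 △ U2 there exists u' ∈ U1 △ U2 such that U1 △ {u,u'} ∈ F_G. -/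
open Finset
open scoped Classical

variable {V : Type*}

/-- An element of the edge set `E ∪ A` of a mixed graph `G = (V, E, A)`:
`Sum.inl e` is an undirected edge, `Sum.inr a` is a directed edge (arc). -/
abbrev MixedEdge (V : Type*) := Sym2 V ⊕ V × V

/-- The edge set `E ∪ A` of the mixed graph `G = (V, E, A)`. -/
noncomputable def mfGround (E : Finset (Sym2 V)) (A : Finset (V × V)) :
    Finset (MixedEdge V) :=
  E.image Sum.inl ∪ A.image Sum.inr

/-- `f` covers `v`: an undirected edge covers each of its endpoints,
a directed edge covers its head. -/
def MFCovers (f : MixedEdge V) (v : V) : Prop :=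
  Sum.elim (fun e => v ∈ e) (fun a => a.2 = v) f

/-- All endpoints of `f` lie in `X`. -/
def MFInduced (f : MixedEdge V) (X : Finset V) : Prop :=
  Sum.elim (fun e => ∀ v ∈ e, v ∈ X) (fun a => a.1 ∈ X ∧ a.2 ∈ X) f

/-- `F ⊆ E ∪ A` is a matching forest of the mixed graph `G = (V, E, A)`:
every vertex is covered by at most one edge of `F` and the underlying
undirected edge set of `F` is a forest (equivalently, every nonempty
`X ⊆ V` induces at most `|X| - 1` edges of `F`). -/
def IsMatchingForest (E : Finset (Sym2 V)) (A : Finset (V × V))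
    (F : Finset (MixedEdge V)) : Prop :=
  F ⊆ mfGround E A ∧
    (∀ v : V, (F.filter (fun f => MFCovers f v)).card ≤ 1) ∧
    ∀ X : Finset V, X.Nonempty →
      (F.filter (fun f => MFInduced f X)).card ≤ X.card - 1

/-- `∂F`: the set of vertices covered by at least one edge of `F`. -/
noncomputable def mfBoundary [Fintype V] (F : Finset (MixedEdge V)) : Finset V :=
  univ.filter (fun v => ∃ f ∈ F, MFCovers f v)

-- ## basic lemmas

lemma covers_inr {a b v : V} : MFCovers (Sum.inr (a,b)) v ↔ b = v := Iff.rfl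
lemma covers_inl {e : Sym2 V} {v : V} : MFCovers (Sum.inl e) v ↔ v ∈ e := Iff.rfl
lemma induced_inr {a b : V} {Z : Finset V} :
    MFInduced (Sum.inr (a,b)) Z ↔ a ∈ Z ∧ b ∈ Z := Iff.rfl
lemma induced_inl {a b : V} {Z : Finset V} :
    MFInduced (Sum.inl s(a,b)) Z ↔ a ∈ Z ∧ b ∈ Z := by
  constructor
  · intro h; exact ⟨h a (by simp), h b (by simp)⟩
  · rintro ⟨h1, h2⟩ v hv
    rcases Sym2.mem_iff.mp hv with rfl | rfl <;> assumption

section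
variable [Fintype V] {E : Finset (Sym2 V)} {A : Finset (V × V)}
  {F F' F₁ F₂ : Finset (MixedEdge V)}

lemma mem_mfBoundary {F : Finset (MixedEdge V)} {v : V} :
    v ∈ mfBoundary F ↔ ∃ f ∈ F, MFCovers f v := by simp [mfBoundary]

lemma cover_unique (hF : IsMatchingForest E A F) {f g : MixedEdge V} {v : V}
    (hf : f ∈ F) (hg : g ∈ F) (hfv : MFCovers f v) (hgv : MFCovers g v) : f = g := by
  by_contra hne
  have h2 : 1 < (F.filter (fun f => MFCovers f v)).card :=
    Finset.one_lt_card.mpr ⟨f, by simp [hf, hfv], g, by simp [hg, hgv], hne⟩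
  have := hF.2.1 v; omega

lemma mf_subset (hF : IsMatchingForest E A F) (h : F' ⊆ F) : IsMatchingForest E A F' :=
  ⟨h.trans hF.1,
   fun v => le_trans (card_le_card (filter_subset_filter _ h)) (hF.2.1 v),
   fun X hX => le_trans (card_le_card (filter_subset_filter _ h)) (hF.2.2 X hX)⟩

lemma forest_bound (hF : IsMatchingForest E A F) {X : Finset V} (hX : X.Nonempty) :
    (F.filter (fun f => MFInduced f X)).card + 1 ≤ X.card := by
  have h1 := hF.2.2 X hX
  have h2 := Finset.card_pos.mpr hX
  omega

lemma no_loop_inl (hF : IsMatchingForest E A F) (a : V) : Sum.inl (s(a,a)) ∉ F := by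
  intro h
  have hm : Sum.inl (s(a,a)) ∈ F.filter (fun f => MFInduced f ({a} : Finset V)) := by
    simp only [mem_filter]
    exact ⟨h, induced_inl.mpr ⟨mem_singleton_self a, mem_singleton_self a⟩⟩
  have h1 : 1 ≤ (F.filter (fun f => MFInduced f ({a} : Finset V))).card :=
    Finset.card_pos.mpr ⟨_, hm⟩
  have h2 := hF.2.2 {a} ⟨a, mem_singleton_self a⟩
  rw [Finset.card_singleton] at h2; omega

lemma no_loop_inr (hF : IsMatchingForest E A F) (a : V) : Sum.inr (a,a) ∉ F := by
  intro h
  have hm : Sum.inr (a,a) ∈ F.filter (fun f => MFInduced f ({a} : Finset V)) := by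
    simp only [mem_filter]
    exact ⟨h, induced_inr.mpr ⟨mem_singleton_self a, mem_singleton_self a⟩⟩
  have h1 : 1 ≤ (F.filter (fun f => MFInduced f ({a} : Finset V))).card :=
    Finset.card_pos.mpr ⟨_, hm⟩
  have h2 := hF.2.2 {a} ⟨a, mem_singleton_self a⟩
  rw [Finset.card_singleton] at h2; omega

lemma mem_boundary_insert {f : MixedEdge V} {v : V} :
    v ∈ mfBoundary (insert f F) ↔ MFCovers f v ∨ v ∈ mfBoundary F := by
  simp only [mem_mfBoundary, Finset.mem_insert]
  constructor
  · rintro ⟨g, (rfl | hg), hgv⟩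
    · exact Or.inl hgv
    · exact Or.inr ⟨g, hg, hgv⟩
  · rintro (h | ⟨g, hg, hgv⟩)
    · exact ⟨f, Or.inl rfl, h⟩
    · exact ⟨g, Or.inr hg, hgv⟩

lemma mem_boundary_erase (hF : IsMatchingForest E A F) {f : MixedEdge V} (hf : f ∈ F)
    {v : V} : v ∈ mfBoundary (F.erase f) ↔ v ∈ mfBoundary F ∧ ¬ MFCovers f v := by
  simp only [mem_mfBoundary]
  constructor
  · rintro ⟨g, hg, hgv⟩
    have hgF := Finset.mem_of_mem_erase hg
    refine ⟨⟨g, hgF, hgv⟩, fun hfv => ?_⟩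
    exact (Finset.ne_of_mem_erase hg) (cover_unique hF hgF hf hgv hfv)
  · rintro ⟨⟨g, hg, hgv⟩, hnf⟩
    refine ⟨g, Finset.mem_erase.mpr ⟨fun h => hnf (h ▸ hgv), hg⟩, hgv⟩

lemma matching_of {F : Finset (MixedEdge V)}
    (hcov : ∀ v : V, ∀ f ∈ F, ∀ g ∈ F, MFCovers f v → MFCovers g v → f = g) :
    ∀ v : V, (F.filter (fun f => MFCovers f v)).card ≤ 1 := fun v =>
  Finset.card_le_one.mpr (fun a ha b hb =>
    hcov v a (mem_filter.mp ha).1 b (mem_filter.mp hb).1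
      (mem_filter.mp ha).2 (mem_filter.mp hb).2)

end
section
variable [Fintype V] {E : Finset (Sym2 V)} {A : Finset (V × V)}
  {F F' F₁ F₂ : Finset (MixedEdge V)}

/-- covered set of a mixed edge -/
noncomputable def covSet (f : MixedEdge V) : Finset V :=
  Finset.univ.filter (fun v => MFCovers f v)

lemma mem_covSet {f : MixedEdge V} {v : V} : v ∈ covSet f ↔ MFCovers f v := by
  simp [covSet]

/-- Core structural counting lemma: if a set `Y` containing an uncovered vertex `u`
induces `|Y| - 1` edges of a matching forest `F`, then every other vertex of `Y`
is the head of an arc of `F` with tail in `Y`. -/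
lemma struct (hF : IsMatchingForest E A F) {Y : Finset V} {u : V} (hu : u ∈ Y)
    (hucov : ∀ f ∈ F, ¬ MFCovers f u)
    (hcard : (F.filter (fun f => MFInduced f Y)).card + 1 = Y.card) :
    ∀ y ∈ Y, y ≠ u → ∃ s ∈ Y, Sum.inr (s, y) ∈ F := by
  classical
  set S := F.filter (fun f => MFInduced f Y) with hS
  have hSsub : ∀ f ∈ S, f ∈ F := fun f hf => (mem_filter.mp hf).1
  have hSind : ∀ f ∈ S, MFInduced f Y := fun f hf => (mem_filter.mp hf).2
  -- covered sets are inside Y.erase u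
  have h1 : ∀ f ∈ S, covSet f ⊆ Y.erase u := by
    intro f hf v hv
    rw [mem_covSet] at hv
    rcases f with e | ⟨a, b⟩
    · refine Finset.mem_erase.mpr ⟨fun h => hucov _ (hSsub _ hf) (h ▸ hv), ?_⟩
      exact (hSind _ hf) v hv
    · rw [covers_inr] at hv
      subst hv
      exact Finset.mem_erase.mpr ⟨fun h => hucov _ (hSsub _ hf) (h ▸ rfl),
        ((induced_inr).mp (hSind _ hf)).2⟩
  -- each covered set is nonempty
  have h2 : ∀ f ∈ S, 1 ≤ (covSet f).card := by
    intro f hf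
    rcases f with e | ⟨a, b⟩
    · induction e using Sym2.ind with
      | _ a b =>
        refine Finset.card_pos.mpr ⟨a, ?_⟩
        rw [mem_covSet, covers_inl]; simp
    · exact Finset.card_pos.mpr ⟨b, by rw [mem_covSet, covers_inr]⟩
  -- disjointness
  have hdisj : (S : Set (MixedEdge V)).PairwiseDisjoint covSet := by
    intro f hf g hg hne
    simp only [Finset.mem_coe] at hf hg
    refine Finset.disjoint_left.mpr (fun v hvf hvg => hne ?_)
    exact cover_unique hF (hSsub _ hf) (hSsub _ hg)
      (mem_covSet.mp hvf) (mem_covSet.mp hvg)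
  have hBUcard : (S.biUnion covSet).card = ∑ f ∈ S, (covSet f).card :=
    Finset.card_biUnion hdisj
  have hsub : S.biUnion covSet ⊆ Y.erase u := by
    intro v hv
    rcases Finset.mem_biUnion.mp hv with ⟨f, hf, hvf⟩
    exact h1 f hf hvf
  have hgeS : S.card ≤ ∑ f ∈ S, (covSet f).card := by
    calc S.card = ∑ _f ∈ S, 1 := by simp
    _ ≤ _ := Finset.sum_le_sum h2
  have herase : (Y.erase u).card + 1 = Y.card := by
    rw [Finset.card_erase_of_mem hu]
    have := Finset.card_pos.mpr ⟨u, hu⟩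
    omega
  have hle : (S.biUnion covSet).card ≤ (Y.erase u).card := Finset.card_le_card hsub
  have hBU : S.biUnion covSet = Y.erase u := by
    apply Finset.eq_of_subset_of_card_le hsub
    omega
  -- every covered set is a singleton (card 1)
  have hone : ∀ f ∈ S, (covSet f).card = 1 := by
    intro f hf
    by_contra hne
    have hge2 : 2 ≤ (covSet f).card := by
      have := h2 f hf; omega
    have hsum2 : ∑ g ∈ S, (covSet g).card =
        (covSet f).card + ∑ g ∈ S.erase f, (covSet g).card :=
      (Finset.add_sum_erase S _ hf).symm
    have hrest : (S.erase f).card ≤ ∑ g ∈ S.erase f, (covSet g).card := by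
      calc (S.erase f).card = ∑ _g ∈ S.erase f, 1 := by simp
      _ ≤ _ := Finset.sum_le_sum (fun g hg => h2 g (Finset.mem_of_mem_erase hg))
    have hcerase : (S.erase f).card + 1 = S.card := by
      rw [Finset.card_erase_of_mem hf]
      have := Finset.card_pos.mpr ⟨f, hf⟩
      omega
    omega
  -- conclusion
  intro y hy hyu
  have hyY : y ∈ S.biUnion covSet := by
    rw [hBU]; exact Finset.mem_erase.mpr ⟨hyu, hy⟩
  rcases Finset.mem_biUnion.mp hyY with ⟨f, hf, hyf⟩
  rcases f with e | ⟨a, b⟩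
  · -- impossible: an undirected edge covers two distinct vertices
    exfalso
    induction e using Sym2.ind with
    | _ a b =>
      have hab : a ≠ b := by
        intro h; subst h
        exact no_loop_inl hF a (hSsub _ hf)
      have : 2 ≤ (covSet (Sum.inl s(a,b))).card := by
        refine Finset.one_lt_card.mpr ⟨a, ?_, b, ?_, hab⟩
        · rw [mem_covSet, covers_inl]; simp
        · rw [mem_covSet, covers_inl]; simp
      have := hone _ hf
      omega
  · have hb : b = y := covers_inr.mp (mem_covSet.mp hyf)
    subst hb
    exact ⟨a, (induced_inr.mp (hSind _ hf)).1, hSsub _ hf⟩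
end
lemma induced_inter {f : MixedEdge V} {Z₁ Z₂ : Finset V} :
    MFInduced f (Z₁ ∩ Z₂) ↔ MFInduced f Z₁ ∧ MFInduced f Z₂ := by
  rcases f with e | ⟨a, b⟩
  · simp only [MFInduced, Sum.elim_inl]
    constructor
    · intro h
      exact ⟨fun v hv => (Finset.mem_inter.mp (h v hv)).1,
             fun v hv => (Finset.mem_inter.mp (h v hv)).2⟩
    · rintro ⟨h1, h2⟩ v hv
      exact Finset.mem_inter.mpr ⟨h1 v hv, h2 v hv⟩
  · simp only [MFInduced, Sum.elim_inr, Finset.mem_inter]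
    tauto

lemma mfInduced_mono {f : MixedEdge V} {Z₁ Z₂ : Finset V} (h : Z₁ ⊆ Z₂) :
    MFInduced f Z₁ → MFInduced f Z₂ := by
  rcases f with e | ⟨a, b⟩
  · exact fun hf v hv => h (hf v hv)
  · exact fun hf => ⟨h hf.1, h hf.2⟩

section
variable [Fintype V] {E : Finset (Sym2 V)} {A : Finset (V × V)}
  {F F₁ F₂ : Finset (MixedEdge V)}

lemma bad_inter (hF : IsMatchingForest E A F) {Z₁ Z₂ : Finset V}
    (hne : (Z₁ ∩ Z₂).Nonempty)
    (hc1 : (F.filter (fun f => MFInduced f Z₁)).card + 1 = Z₁.card)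
    (hc2 : (F.filter (fun f => MFInduced f Z₂)).card + 1 = Z₂.card) :
    (F.filter (fun f => MFInduced f (Z₁ ∩ Z₂))).card + 1 = (Z₁ ∩ Z₂).card := by
  classical
  set S₁ := F.filter (fun f => MFInduced f Z₁) with hS₁
  set S₂ := F.filter (fun f => MFInduced f Z₂) with hS₂
  have e1 : F.filter (fun f => MFInduced f (Z₁ ∩ Z₂)) = S₁ ∩ S₂ := by
    ext f
    simp only [hS₁, hS₂, Finset.mem_inter, mem_filter, induced_inter]
    tauto
  have e2 : S₁ ∪ S₂ ⊆ F.filter (fun f => MFInduced f (Z₁ ∪ Z₂)) := by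
    intro f hf
    rcases Finset.mem_union.mp hf with h | h
    · rw [mem_filter] at h ⊢
      exact ⟨h.1, mfInduced_mono Finset.subset_union_left h.2⟩
    · rw [mem_filter] at h ⊢
      exact ⟨h.1, mfInduced_mono Finset.subset_union_right h.2⟩
  have hcards : (S₁ ∪ S₂).card + (S₁ ∩ S₂).card = S₁.card + S₂.card :=
    Finset.card_union_add_card_inter S₁ S₂
  have hZne : (Z₁ ∪ Z₂).Nonempty := by
    rcases hne with ⟨x, hx⟩
    exact ⟨x, Finset.mem_union.mpr (Or.inl (Finset.mem_inter.mp hx).1)⟩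
  have hU : (F.filter (fun f => MFInduced f (Z₁ ∪ Z₂))).card + 1 ≤ (Z₁ ∪ Z₂).card :=
    forest_bound hF hZne
  have hUle : (S₁ ∪ S₂).card ≤ (F.filter (fun f => MFInduced f (Z₁ ∪ Z₂))).card :=
    Finset.card_le_card e2
  have hZ : (Z₁ ∩ Z₂).card + (Z₁ ∪ Z₂).card = Z₁.card + Z₂.card :=
    Finset.card_inter_add_card_union Z₁ Z₂
  have hup : (F.filter (fun f => MFInduced f (Z₁ ∩ Z₂))).card + 1 ≤ (Z₁ ∩ Z₂).card :=
    forest_bound hF hne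
  rw [e1] at hup ⊢
  omega

/-- existence of a minimum bad set containing `u` and `t`. -/
lemma min_bad (hF : IsMatchingForest E A F) {u t : V}
    (hbad : ∃ Z : Finset V, u ∈ Z ∧ t ∈ Z ∧
      (F.filter (fun f => MFInduced f Z)).card + 1 = Z.card) :
    ∃ Y : Finset V, (u ∈ Y ∧ t ∈ Y ∧
      (F.filter (fun f => MFInduced f Y)).card + 1 = Y.card) ∧
      ∀ Z : Finset V, u ∈ Z → t ∈ Z →
        (F.filter (fun f => MFInduced f Z)).card + 1 = Z.card → Y ⊆ Z := by
  classical
  set Bad : Finset V → Prop := fun Z => u ∈ Z ∧ t ∈ Z ∧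
      (F.filter (fun f => MFInduced f Z)).card + 1 = Z.card with hBad
  have hS : (Finset.univ.filter Bad).Nonempty := by
    rcases hbad with ⟨Z, hZ⟩
    exact ⟨Z, by simp [hBad, hZ.1, hZ.2.1, hZ.2.2]⟩
  obtain ⟨Y, hY, hmin⟩ := Finset.exists_min_image (Finset.univ.filter Bad) Finset.card hS
  rw [Finset.mem_filter] at hY
  refine ⟨Y, hY.2, fun Z hu ht hc => ?_⟩
  have hZY : Bad (Y ∩ Z) := by
    refine ⟨Finset.mem_inter.mpr ⟨hY.2.1, hu⟩, Finset.mem_inter.mpr ⟨hY.2.2.1, ht⟩, ?_⟩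
    exact bad_inter hF ⟨u, Finset.mem_inter.mpr ⟨hY.2.1, hu⟩⟩ hY.2.2.2 hc
  have hle := hmin (Y ∩ Z) (by simp [hBad, hZY.1, hZY.2.1, hZY.2.2])
  have hsub : Y ∩ Z ⊆ Y := Finset.inter_subset_left
  have : Y ∩ Z = Y := Finset.eq_of_subset_of_card_le hsub hle
  intro x hx
  rw [← this] at hx
  exact (Finset.mem_inter.mp hx).2
end
section
variable [Fintype V] {E : Finset (Sym2 V)} {A : Finset (V × V)}
  {F F₁ F₂ : Finset (MixedEdge V)}

lemma covSet_inr {a b : V} : covSet (Sum.inr (a,b) : MixedEdge V) = {b} := by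
  ext v; simp [mem_covSet, covers_inr, eq_comm]

lemma covSet_inl {a b : V} : covSet (Sum.inl s(a,b) : MixedEdge V) = {a, b} := by
  ext v; simp [mem_covSet, covers_inl, Sym2.mem_iff]

lemma boundary_insert_eq {f : MixedEdge V} :
    mfBoundary (insert f F) = covSet f ∪ mfBoundary F := by
  ext v; rw [mem_boundary_insert, Finset.mem_union, mem_covSet]

lemma boundary_erase_eq (hF : IsMatchingForest E A F) {f : MixedEdge V} (hf : f ∈ F) :
    mfBoundary (F.erase f) = mfBoundary F \ covSet f := by
  ext v; rw [mem_boundary_erase hF hf, Finset.mem_sdiff, mem_covSet]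

lemma matching_insert_of {F' : Finset (MixedEdge V)} {f₀ : MixedEdge V}
    (hbase : ∀ v : V, ∀ a ∈ F', ∀ b ∈ F', MFCovers a v → MFCovers b v → a = b)
    (hnc : ∀ v : V, MFCovers f₀ v → ∀ g ∈ F', ¬ MFCovers g v) :
    ∀ v : V, ((insert f₀ F').filter (fun f => MFCovers f v)).card ≤ 1 := by
  apply matching_of
  intro v a ha b hb hav hbv
  rcases Finset.mem_insert.mp ha with ha' | ha' <;>
    rcases Finset.mem_insert.mp hb with hb' | hb'
  · rw [ha', hb']
  · exact absurd hbv (hnc v (ha' ▸ hav) b hb')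
  · exact absurd hav (hnc v (hb' ▸ hbv) a ha')
  · exact hbase v a ha' b hb' hav hbv

/-- adding an arc `(t,u)` with `u` uncovered, when no "bad" set exists. -/
lemma add_arc (hF₁ : IsMatchingForest E A F₁) {u t : V}
    (hucov : ∀ f ∈ F₁, ¬ MFCovers f u)
    (hgnd : (Sum.inr (t,u) : MixedEdge V) ∈ mfGround E A)
    (hnobad : ∀ Z : Finset V, t ∈ Z → u ∈ Z →
      (F₁.filter (fun f => MFInduced f Z)).card + 1 ≠ Z.card) :
    IsMatchingForest E A (insert (Sum.inr (t,u)) F₁) := by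
  refine ⟨?_, ?_, ?_⟩
  · intro f hf
    rcases Finset.mem_insert.mp hf with rfl | hf
    · exact hgnd
    · exact hF₁.1 hf
  · refine matching_insert_of (fun v a ha b hb => cover_unique hF₁ ha hb) ?_
    intro v hv g hg hgv
    have h : u = v := hv
    exact hucov g hg (h ▸ hgv)
  · intro Z hZ
    rw [Finset.filter_insert]
    by_cases hind : MFInduced (Sum.inr (t,u) : MixedEdge V) Z
    · rw [if_pos hind]
      rcases induced_inr.mp hind with ⟨htZ, huZ⟩
      have h1 := forest_bound hF₁ hZ
      have h2 := hnobad Z htZ huZ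
      have h3 := Finset.card_insert_le (α := MixedEdge V) (Sum.inr (t,u))
        (F₁.filter (fun f => MFInduced f Z))
      omega
    · rw [if_neg hind]
      exact hF₁.2.2 Z hZ

/-- swapping an arc `(s,y)` of `F₁` for a new arc `(t,u)` with `u` uncovered,
when every bad set contains `s` and `y`. -/
lemma swap_arc (hF₁ : IsMatchingForest E A F₁) {u t s y : V}
    (hucov : ∀ f ∈ F₁, ¬ MFCovers f u)
    (hgnd : (Sum.inr (t,u) : MixedEdge V) ∈ mfGround E A)
    (harc : Sum.inr (s,y) ∈ F₁)
    (hfix : ∀ Z : Finset V, t ∈ Z → u ∈ Z →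
      (F₁.filter (fun f => MFInduced f Z)).card + 1 = Z.card → (s ∈ Z ∧ y ∈ Z)) :
    IsMatchingForest E A (insert (Sum.inr (t,u)) (F₁.erase (Sum.inr (s,y)))) := by
  have herase : F₁.erase (Sum.inr (s,y)) ⊆ F₁ := Finset.erase_subset _ _
  refine ⟨?_, ?_, ?_⟩
  · intro f hf
    rcases Finset.mem_insert.mp hf with rfl | hf
    · exact hgnd
    · exact hF₁.1 (herase hf)
  · refine matching_insert_of
      (fun v a ha b hb => cover_unique hF₁ (herase ha) (herase hb)) ?_
    intro v hv g hg hgv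
    have h : u = v := hv
    exact hucov g (herase hg) (h ▸ hgv)
  · intro Z hZ
    rw [Finset.filter_insert]
    by_cases hind : MFInduced (Sum.inr (t,u) : MixedEdge V) Z
    · rw [if_pos hind]
      rcases induced_inr.mp hind with ⟨htZ, huZ⟩
      have h3 := Finset.card_insert_le (α := MixedEdge V) (Sum.inr (t,u))
        ((F₁.erase (Sum.inr (s,y))).filter (fun f => MFInduced f Z))
      have h1 := forest_bound hF₁ hZ
      by_cases hbad : (F₁.filter (fun f => MFInduced f Z)).card + 1 = Z.card
      · obtain ⟨hsZ, hyZ⟩ := hfix Z htZ huZ hbad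
        have hmem : Sum.inr (s,y) ∈ F₁.filter (fun f => MFInduced f Z) := by
          rw [Finset.mem_filter]
          exact ⟨harc, induced_inr.mpr ⟨hsZ, hyZ⟩⟩
        have he : (F₁.erase (Sum.inr (s,y))).filter (fun f => MFInduced f Z)
            = (F₁.filter (fun f => MFInduced f Z)).erase (Sum.inr (s,y)) := by
          rw [Finset.filter_erase]
        rw [he] at h3
        have hc := Finset.card_erase_of_mem hmem
        have hpos : 1 ≤ (F₁.filter (fun f => MFInduced f Z)).card :=
          Finset.card_pos.mpr ⟨_, hmem⟩
        rw [he]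
        omega
      · have h2 : ((F₁.erase (Sum.inr (s,y))).filter (fun f => MFInduced f Z)).card
            ≤ (F₁.filter (fun f => MFInduced f Z)).card :=
          Finset.card_le_card (Finset.filter_subset_filter _ herase)
        omega
    · rw [if_neg hind]
      calc ((F₁.erase (Sum.inr (s,y))).filter (fun f => MFInduced f Z)).card
          ≤ (F₁.filter (fun f => MFInduced f Z)).card :=
            Finset.card_le_card (Finset.filter_subset_filter _ herase)
        _ ≤ Z.card - 1 := hF₁.2.2 Z hZ

/-- adding an undirected edge `{u,w}` with both `u, w` uncovered. -/
lemma add_edge (hF₁ : IsMatchingForest E A F₁) {u w : V} (huw : u ≠ w)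
    (hucov : ∀ f ∈ F₁, ¬ MFCovers f u)
    (hwcov : ∀ f ∈ F₁, ¬ MFCovers f w)
    (hgnd : (Sum.inl s(u,w) : MixedEdge V) ∈ mfGround E A) :
    IsMatchingForest E A (insert (Sum.inl s(u,w)) F₁) := by
  refine ⟨?_, ?_, ?_⟩
  · intro f hf
    rcases Finset.mem_insert.mp hf with rfl | hf
    · exact hgnd
    · exact hF₁.1 hf
  · refine matching_insert_of (fun v a ha b hb => cover_unique hF₁ ha hb) ?_
    intro v hv g hg hgv
    rcases Sym2.mem_iff.mp (covers_inl.mp hv) with h | h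
    · exact hucov g hg (h ▸ hgv)
    · exact hwcov g hg (h ▸ hgv)
  · intro Z hZ
    rw [Finset.filter_insert]
    by_cases hind : MFInduced (Sum.inl s(u,w) : MixedEdge V) Z
    · rw [if_pos hind]
      rcases induced_inl.mp hind with ⟨huZ, hwZ⟩
      have h1 := forest_bound hF₁ hZ
      have h2 : (F₁.filter (fun f => MFInduced f Z)).card + 1 ≠ Z.card := by
        intro hbad
        obtain ⟨s', _, harc⟩ := struct hF₁ huZ hucov hbad w hwZ (Ne.symm huw)
        exact hwcov _ harc (covers_inr.mpr rfl)
      have h3 := Finset.card_insert_le (α := MixedEdge V) (Sum.inl s(u,w))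
        (F₁.filter (fun f => MFInduced f Z))
      omega
    · rw [if_neg hind]
      exact hF₁.2.2 Z hZ

/-- swapping the unique edge `g` covering `w` for the undirected edge `{u,w}`,
where `u` is uncovered. -/
lemma swap_cover (hF₁ : IsMatchingForest E A F₁) {u w : V} (huw : u ≠ w)
    (hucov : ∀ f ∈ F₁, ¬ MFCovers f u)
    {g : MixedEdge V} (hg : g ∈ F₁) (hgw : MFCovers g w)
    (hgnd : (Sum.inl s(u,w) : MixedEdge V) ∈ mfGround E A) :
    IsMatchingForest E A (insert (Sum.inl s(u,w)) (F₁.erase g)) := by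
  have herase : F₁.erase g ⊆ F₁ := Finset.erase_subset _ _
  have hwonly : ∀ f ∈ F₁, MFCovers f w → f = g :=
    fun f hf hfw => cover_unique hF₁ hf hg hfw hgw
  have hmfE : IsMatchingForest E A (F₁.erase g) := mf_subset hF₁ herase
  refine ⟨?_, ?_, ?_⟩
  · intro f hf
    rcases Finset.mem_insert.mp hf with rfl | hf
    · exact hgnd
    · exact hF₁.1 (herase hf)
  · refine matching_insert_of
      (fun v a ha b hb => cover_unique hF₁ (herase ha) (herase hb)) ?_
    intro v hv g' hg' hgv'
    rcases Sym2.mem_iff.mp (covers_inl.mp hv) with h | h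
    · exact hucov g' (herase hg') (h ▸ hgv')
    · exact (Finset.mem_erase.mp hg').1 (hwonly g' (herase hg') (h ▸ hgv'))
  · intro Z hZ
    rw [Finset.filter_insert]
    by_cases hind : MFInduced (Sum.inl s(u,w) : MixedEdge V) Z
    · rw [if_pos hind]
      rcases induced_inl.mp hind with ⟨huZ, hwZ⟩
      have h1 := forest_bound hmfE hZ
      have h2 : ((F₁.erase g).filter (fun f => MFInduced f Z)).card + 1 ≠ Z.card := by
        intro hbad
        have hucov' : ∀ f ∈ F₁.erase g, ¬ MFCovers f u := fun f hf => hucov f (herase hf)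
        obtain ⟨s', _, harc⟩ := struct hmfE huZ hucov' hbad w hwZ (Ne.symm huw)
        have heq := hwonly _ (herase harc) (covers_inr.mpr rfl)
        exact (Finset.mem_erase.mp harc).1 heq
      have h3 := Finset.card_insert_le (α := MixedEdge V) (Sum.inl s(u,w))
        ((F₁.erase g).filter (fun f => MFInduced f Z))
      omega
    · rw [if_neg hind]
      exact hmfE.2.2 Z hZ
end
lemma sd1 {B : Finset V} {u : V} (hu : u ∉ B) :
    ({u} : Finset V) ∪ B = symmDiff B {u, u} := by
  ext v
  simp only [Finset.mem_symmDiff, Finset.mem_union, Finset.mem_insert, Finset.mem_singleton]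
  by_cases hvu : v = u <;> simp_all

lemma sd2 {B : Finset V} {u w : V} (hu : u ∉ B) (hw : w ∉ B) :
    ({u, w} : Finset V) ∪ B = symmDiff B {u, w} := by
  ext v
  simp only [Finset.mem_symmDiff, Finset.mem_union, Finset.mem_insert, Finset.mem_singleton]
  by_cases hvu : v = u <;> by_cases hvw : v = w <;> simp_all

lemma sd3 {B : Finset V} {u y : V} (hu : u ∉ B) (hy : y ∈ B) :
    ({u} : Finset V) ∪ (B \ {y}) = symmDiff B {u, y} := by
  ext v
  simp only [Finset.mem_symmDiff, Finset.mem_union, Finset.mem_insert, Finset.mem_singleton,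
    Finset.mem_sdiff]
  by_cases hvu : v = u <;> by_cases hvy : v = y <;> simp_all

lemma sd4 {B : Finset V} {u w : V} (hu : u ∉ B) (hw : w ∈ B) :
    ({u, w} : Finset V) ∪ (B \ {w}) = symmDiff B {u, u} := by
  ext v
  simp only [Finset.mem_symmDiff, Finset.mem_union, Finset.mem_insert, Finset.mem_singleton,
    Finset.mem_sdiff]
  by_cases hvu : v = u <;> by_cases hvw : v = w <;> simp_all

lemma sd5 {B : Finset V} {u w z : V} (hu : u ∉ B) (hw : w ∈ B) (hz : z ∈ B)
    (hwz : w ≠ z) : ({u, w} : Finset V) ∪ (B \ {w, z}) = symmDiff B {u, z} := by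
  ext v
  simp only [Finset.mem_symmDiff, Finset.mem_union, Finset.mem_insert, Finset.mem_singleton,
    Finset.mem_sdiff]
  by_cases hvu : v = u <;> by_cases hvw : v = w <;> by_cases hvz : v = z <;> simp_all

lemma sd_comb1 {B : Finset V} {u y : V} (hu : u ∉ B) (hy : y ∈ B) :
    symmDiff (({u} : Finset V) ∪ (B \ {y})) {y, y} = symmDiff B {u, u} := by
  ext v
  simp only [Finset.mem_symmDiff, Finset.mem_union, Finset.mem_insert, Finset.mem_singleton,
    Finset.mem_sdiff]
  by_cases hvu : v = u <;> by_cases hvy : v = y <;> simp_all <;> tauto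

lemma sd_comb2 {B : Finset V} {u y z' : V} (hu : u ∉ B) (hy : y ∈ B)
    (h1 : z' ≠ u) (h2 : z' ≠ y) :
    symmDiff (({u} : Finset V) ∪ (B \ {y})) {y, z'} = symmDiff B {u, z'} := by
  ext v
  simp only [Finset.mem_symmDiff, Finset.mem_union, Finset.mem_insert, Finset.mem_singleton,
    Finset.mem_sdiff]
  by_cases hvu : v = u <;> by_cases hvy : v = y <;> by_cases hvz : v = z' <;> simp_all <;> tauto

lemma sd_comb3 {B : Finset V} {u w z : V} (hu : u ∉ B) (hw : w ∈ B) (hz : z ∈ B)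
    (hwz : w ≠ z) (hzu : z ≠ u) :
    symmDiff (({u, w} : Finset V) ∪ (B \ {w, z})) {z, z} = symmDiff B {u, u} := by
  ext v
  simp only [Finset.mem_symmDiff, Finset.mem_union, Finset.mem_insert, Finset.mem_singleton,
    Finset.mem_sdiff]
  by_cases hvu : v = u <;> by_cases hvw : v = w <;> by_cases hvz : v = z <;> simp_all <;> tauto

lemma sd_comb4 {B : Finset V} {u w z z' : V} (hu : u ∉ B) (hw : w ∈ B) (hz : z ∈ B)
    (hwz : w ≠ z) (h1 : z' ≠ u) (h2 : z' ≠ z) (h3 : z' ≠ w) :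
    symmDiff (({u, w} : Finset V) ∪ (B \ {w, z})) {z, z'} = symmDiff B {u, z'} := by
  ext v
  simp only [Finset.mem_symmDiff, Finset.mem_union, Finset.mem_insert, Finset.mem_singleton,
    Finset.mem_sdiff]
  by_cases hvu : v = u <;> by_cases hvw : v = w <;> by_cases hvz : v = z <;>
    by_cases hvz' : v = z' <;> simp_all <;> tauto
section
variable [Fintype V] {E : Finset (Sym2 V)} {A : Finset (V × V)}
  {F F₁ F₂ : Finset (MixedEdge V)}

/-- Main lemma: given matching forests `F₁, F₂` and `u ∈ ∂F₂ \ ∂F₁`, there is `u'`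
in the symmetric difference of the boundaries and a matching forest with boundary
`∂F₁ △ {u, u'}`. -/
lemma lemB (hF₂ : IsMatchingForest E A F₂) :
    ∀ n : ℕ, ∀ F₁ : Finset (MixedEdge V), (F₁ \ F₂).card ≤ n →
      IsMatchingForest E A F₁ →
      ∀ u : V, u ∈ mfBoundary F₂ → u ∉ mfBoundary F₁ →
      ∃ u', ((u' ∈ mfBoundary F₁ ∧ u' ∉ mfBoundary F₂) ∨
             (u' ∈ mfBoundary F₂ ∧ u' ∉ mfBoundary F₁)) ∧
        ∃ F, IsMatchingForest E A F ∧
          mfBoundary F = symmDiff (mfBoundary F₁) {u, u'} := by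
  intro n
  induction n using Nat.strong_induction_on with
  | _ n IH =>
  intro F₁ hle hF₁ u hu2 hu1
  have hucov : ∀ f ∈ F₁, ¬ MFCovers f u := fun f hf hfu =>
    hu1 (mem_mfBoundary.mpr ⟨f, hf, hfu⟩)
  obtain ⟨f₂, hf₂F, hf₂u⟩ := mem_mfBoundary.mp hu2
  have hf₂gnd : f₂ ∈ mfGround E A := hF₂.1 hf₂F
  have hf₂n1 : f₂ ∉ F₁ := fun h => hucov f₂ h hf₂u
  rcases f₂ with e | ⟨t, u₀⟩
  · -- ### Case II : `f₂` is an undirected edge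
    obtain ⟨w, rfl⟩ := Sym2.mem_iff_exists.mp (covers_inl.mp hf₂u)
    have huw : u ≠ w := by
      rintro rfl
      exact no_loop_inl hF₂ u hf₂F
    have hw2 : w ∈ mfBoundary F₂ :=
      mem_mfBoundary.mpr ⟨_, hf₂F, covers_inl.mpr (by simp)⟩
    by_cases hw1 : w ∈ mfBoundary F₁
    · -- `w` is covered in `F₁` by `g`
      obtain ⟨g, hgF, hgw⟩ := mem_mfBoundary.mp hw1
      have hmf := swap_cover hF₁ huw hucov hgF hgw hf₂gnd
      have hgn2 : g ∉ F₂ := by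
        intro hgF₂
        have : g = Sum.inl s(u,w) := cover_unique hF₂ hgF₂ hf₂F hgw
          (covers_inl.mpr (by simp))
        exact hf₂n1 (this ▸ hgF)
      rcases g with e' | ⟨σ, τ⟩
      · -- `g` is an undirected edge `{w, z}`
        obtain ⟨z, rfl⟩ := Sym2.mem_iff_exists.mp (covers_inl.mp hgw)
        have hwz : w ≠ z := by
          rintro rfl
          exact no_loop_inl hF₁ w hgF
        have hz1 : z ∈ mfBoundary F₁ :=
          mem_mfBoundary.mpr ⟨_, hgF, covers_inl.mpr (by simp)⟩
        have hzu : z ≠ u := fun h => hu1 (h ▸ hz1)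
        have hbF' : mfBoundary (insert (Sum.inl s(u,w)) (F₁.erase (Sum.inl s(w,z))))
            = {u, w} ∪ (mfBoundary F₁ \ {w, z}) := by
          rw [boundary_insert_eq, covSet_inl, boundary_erase_eq hF₁ hgF, covSet_inl]
        by_cases hz2 : z ∈ mfBoundary F₂
        · -- recurse on `z`
          have hz1' : z ∉ mfBoundary (insert (Sum.inl s(u,w)) (F₁.erase (Sum.inl s(w,z)))) := by
            rw [hbF']
            simp only [Finset.mem_union, Finset.mem_insert, Finset.mem_singleton,
              Finset.mem_sdiff]
            rintro ((h | h) | ⟨_, h⟩)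
            · exact hzu h
            · exact hwz h.symm
            · exact h (Or.inr (by trivial))
          have hss : (insert (Sum.inl s(u,w)) (F₁.erase (Sum.inl s(w,z)))) \ F₂
              ⊂ F₁ \ F₂ := by
            constructor
            · intro f hf
              rw [Finset.mem_sdiff] at hf ⊢
              rcases Finset.mem_insert.mp hf.1 with rfl | hf'
              · exact absurd hf₂F hf.2
              · exact ⟨Finset.mem_of_mem_erase hf', hf.2⟩
            · intro hsub
              have hmemsd : Sum.inl s(w,z) ∈ F₁ \ F₂ := Finset.mem_sdiff.mpr ⟨hgF, hgn2⟩
              have := hsub hmemsd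
              rw [Finset.mem_sdiff] at this
              rcases Finset.mem_insert.mp this.1 with heq | hmem
              · rw [Sum.inl.injEq] at heq
                have hu' : u ∈ s(w,z) := by rw [heq]; simp
                rcases Sym2.mem_iff.mp hu' with h | h
                · exact huw h
                · exact hzu h.symm
              · exact (Finset.mem_erase.mp hmem).1 rfl
          have hlt : ((insert (Sum.inl s(u,w)) (F₁.erase (Sum.inl s(w,z)))) \ F₂).card
              < (F₁ \ F₂).card := Finset.card_lt_card hss
          obtain ⟨z', hz'mem, F'', hF'', hbF''⟩ :=
            IH _ (lt_of_lt_of_le hlt hle) _ le_rfl hmf z hz2 hz1'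
          have huF' : u ∈ mfBoundary (insert (Sum.inl s(u,w)) (F₁.erase (Sum.inl s(w,z)))) := by
            rw [hbF']; simp
          have hwF' : w ∈ mfBoundary (insert (Sum.inl s(u,w)) (F₁.erase (Sum.inl s(w,z)))) := by
            rw [hbF']; simp
          have hz'u : z' ≠ u := by
            rintro rfl
            rcases hz'mem with ⟨_, h⟩ | ⟨_, h⟩
            · exact h hu2
            · exact h huF'
          have hz'w : z' ≠ w := by
            rintro rfl
            rcases hz'mem with ⟨_, h⟩ | ⟨_, h⟩
            · exact h hw2
            · exact h hwF'
          by_cases hz'z : z' = z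
          · subst hz'z
            refine ⟨u, Or.inr ⟨hu2, hu1⟩, F'', hF'', ?_⟩
            rw [hbF'', hbF']
            exact sd_comb3 hu1 hw1 hz1 hwz hzu
          · refine ⟨z', ?_, F'', hF'', ?_⟩
            · rcases hz'mem with ⟨h1, h2⟩ | ⟨h1, h2⟩
              · rw [hbF'] at h1
                simp only [Finset.mem_union, Finset.mem_insert, Finset.mem_singleton,
                  Finset.mem_sdiff] at h1
                rcases h1 with (rfl | rfl) | ⟨h1', _⟩
                · exact absurd rfl hz'u
                · exact absurd rfl hz'w
                · exact Or.inl ⟨h1', h2⟩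
              · refine Or.inr ⟨h1, fun hz'B => h2 ?_⟩
                rw [hbF']
                simp only [Finset.mem_union, Finset.mem_insert, Finset.mem_singleton,
                  Finset.mem_sdiff]
                refine Or.inr ⟨hz'B, ?_⟩
                push_neg
                exact ⟨hz'w, hz'z⟩
            · rw [hbF'', hbF']
              exact sd_comb4 hu1 hw1 hz1 hwz hz'u hz'z hz'w
        · -- `z ∉ ∂F₂` : done
          refine ⟨z, Or.inl ⟨hz1, hz2⟩, _, hmf, ?_⟩
          rw [boundary_insert_eq, covSet_inl, boundary_erase_eq hF₁ hgF, covSet_inl]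
          exact sd5 hu1 hw1 hz1 hwz
      · -- `g` is an arc `(σ, τ)` with head `w`
        have hτ : τ = w := covers_inr.mp hgw
        subst hτ
        refine ⟨u, Or.inr ⟨hu2, hu1⟩, _, hmf, ?_⟩
        rw [boundary_insert_eq, covSet_inl, boundary_erase_eq hF₁ hgF, covSet_inr]
        exact sd4 hu1 hw1
    · -- `w` uncovered in `F₁` : just add the edge
      have hwcov : ∀ f ∈ F₁, ¬ MFCovers f w := fun f hf hfw =>
        hw1 (mem_mfBoundary.mpr ⟨f, hf, hfw⟩)
      have hmf := add_edge hF₁ huw hucov hwcov hf₂gnd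
      refine ⟨w, Or.inr ⟨hw2, hw1⟩, _, hmf, ?_⟩
      rw [boundary_insert_eq, covSet_inl]
      exact sd2 hu1 hw1
  · -- ### Case I : `f₂` is an arc `(t, u)`
    have hu₀ : u = u₀ := (covers_inr.mp hf₂u).symm
    subst hu₀
    have htu : t ≠ u := by
      rintro rfl
      exact no_loop_inr hF₂ t hf₂F
    by_cases hbad : ∃ Z : Finset V, t ∈ Z ∧ u ∈ Z ∧
        (F₁.filter (fun f => MFInduced f Z)).card + 1 = Z.card
    · -- a bad set exists; take the minimum one
      obtain ⟨Y, ⟨htY, huY, hYc⟩, hYmin⟩ := min_bad hF₁ hbad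
      have hstruct := struct hF₁ huY hucov hYc
      by_cases hb1 : ∃ y ∈ Y.erase u, y ∉ mfBoundary F₂
      · -- some head `y` in the minimum bad set is not covered by `F₂`
        obtain ⟨y, hyE, hy2⟩ := hb1
        have hyY := Finset.mem_of_mem_erase hyE
        have hyu : y ≠ u := (Finset.mem_erase.mp hyE).1
        obtain ⟨s, hsY, harc⟩ := hstruct y hyY hyu
        have hfix : ∀ Z : Finset V, t ∈ Z → u ∈ Z →
            (F₁.filter (fun f => MFInduced f Z)).card + 1 = Z.card → (s ∈ Z ∧ y ∈ Z) :=
          fun Z h1 h2 h3 => ⟨hYmin Z h1 h2 h3 hsY, hYmin Z h1 h2 h3 hyY⟩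
        have hmf := swap_arc hF₁ hucov hf₂gnd harc hfix
        have hy1 : y ∈ mfBoundary F₁ :=
          mem_mfBoundary.mpr ⟨_, harc, covers_inr.mpr rfl⟩
        refine ⟨y, Or.inl ⟨hy1, hy2⟩, _, hmf, ?_⟩
        rw [boundary_insert_eq, covSet_inr, boundary_erase_eq hF₁ harc, covSet_inr]
        exact sd3 hu1 hy1
      · by_cases hb2 : ∃ y ∈ Y.erase u, ∃ s ∈ Y, Sum.inr (s,y) ∈ F₁ ∧ Sum.inr (s,y) ∉ F₂
        · -- swap out an arc of `F₁ \ F₂` and recurse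
          obtain ⟨y, hyE, s, hsY, harc, hnF₂⟩ := hb2
          have hyY := Finset.mem_of_mem_erase hyE
          have hyu : y ≠ u := (Finset.mem_erase.mp hyE).1
          push_neg at hb1
          have hy2 : y ∈ mfBoundary F₂ := hb1 y hyE
          have hfix : ∀ Z : Finset V, t ∈ Z → u ∈ Z →
              (F₁.filter (fun f => MFInduced f Z)).card + 1 = Z.card → (s ∈ Z ∧ y ∈ Z) :=
            fun Z h1 h2 h3 => ⟨hYmin Z h1 h2 h3 hsY, hYmin Z h1 h2 h3 hyY⟩
          have hmf := swap_arc hF₁ hucov hf₂gnd harc hfix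
          have hy1 : y ∈ mfBoundary F₁ :=
            mem_mfBoundary.mpr ⟨_, harc, covers_inr.mpr rfl⟩
          have hbF' : mfBoundary (insert (Sum.inr (t,u)) (F₁.erase (Sum.inr (s,y))))
              = {u} ∪ (mfBoundary F₁ \ {y}) := by
            rw [boundary_insert_eq, covSet_inr, boundary_erase_eq hF₁ harc, covSet_inr]
          have hy1' : y ∉ mfBoundary (insert (Sum.inr (t,u)) (F₁.erase (Sum.inr (s,y)))) := by
            rw [hbF']
            simp [hyu]
          have hss : (insert (Sum.inr (t,u)) (F₁.erase (Sum.inr (s,y)))) \ F₂ ⊂ F₁ \ F₂ := by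
            constructor
            · intro f hf
              rw [Finset.mem_sdiff] at hf ⊢
              rcases Finset.mem_insert.mp hf.1 with rfl | hf'
              · exact absurd hf₂F hf.2
              · exact ⟨Finset.mem_of_mem_erase hf', hf.2⟩
            · intro hsub
              have hmemsd : Sum.inr (s,y) ∈ F₁ \ F₂ := Finset.mem_sdiff.mpr ⟨harc, hnF₂⟩
              have := hsub hmemsd
              rw [Finset.mem_sdiff] at this
              rcases Finset.mem_insert.mp this.1 with heq | hmem
              · have : u = y := congrArg (fun f => Sum.elim (fun _ => u) Prod.snd f) heq.symm
                exact hyu this.symm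
              · exact (Finset.mem_erase.mp hmem).1 rfl
          have hlt : ((insert (Sum.inr (t,u)) (F₁.erase (Sum.inr (s,y)))) \ F₂).card
              < (F₁ \ F₂).card := Finset.card_lt_card hss
          obtain ⟨z', hz'mem, F'', hF'', hbF''⟩ :=
            IH _ (lt_of_lt_of_le hlt hle) _ le_rfl hmf y hy2 hy1'
          have huF' : u ∈ mfBoundary (insert (Sum.inr (t,u)) (F₁.erase (Sum.inr (s,y)))) := by
            rw [hbF']; simp
          have hz'u : z' ≠ u := by
            rintro rfl
            rcases hz'mem with ⟨_, h⟩ | ⟨_, h⟩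
            · exact h hu2
            · exact h huF'
          by_cases hz'y : z' = y
          · subst hz'y
            refine ⟨u, Or.inr ⟨hu2, hu1⟩, F'', hF'', ?_⟩
            rw [hbF'', hbF']
            exact sd_comb1 hu1 hy1
          · refine ⟨z', ?_, F'', hF'', ?_⟩
            · rcases hz'mem with ⟨h1, h2⟩ | ⟨h1, h2⟩
              · rw [hbF'] at h1
                simp only [Finset.mem_union, Finset.mem_singleton, Finset.mem_sdiff] at h1
                rcases h1 with rfl | ⟨h1', _⟩
                · exact absurd rfl hz'u
                · exact Or.inl ⟨h1', h2⟩
              · refine Or.inr ⟨h1, fun hz'B => h2 ?_⟩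
                rw [hbF']
                simp only [Finset.mem_union, Finset.mem_singleton, Finset.mem_sdiff]
                exact Or.inr ⟨hz'B, hz'y⟩
            · rw [hbF'', hbF']
              exact sd_comb2 hu1 hy1 hz'u hz'y
        · -- contradiction: `F₂` would contain a directed cycle
          exfalso
          push_neg at hb1 hb2
          have hcover : ∀ y ∈ Y, ∃ f ∈ F₂.filter (fun f => MFInduced f Y),
              ∃ sv : V, f = Sum.inr (sv, y) := by
            intro y hy
            by_cases hyu : y = u
            · subst hyu
              exact ⟨Sum.inr (t, y), Finset.mem_filter.mpr
                ⟨hf₂F, induced_inr.mpr ⟨htY, hy⟩⟩, t, rfl⟩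
            · obtain ⟨s, hsY, harc⟩ := hstruct y hy hyu
              have harc2 := hb2 y (Finset.mem_erase.mpr ⟨hyu, hy⟩) s hsY harc
              exact ⟨Sum.inr (s, y), Finset.mem_filter.mpr
                ⟨harc2, induced_inr.mpr ⟨hsY, hy⟩⟩, s, rfl⟩
          have hYne : Y.Nonempty := ⟨u, huY⟩
          have hsurj : Set.SurjOn (fun f : MixedEdge V => Sum.elim (fun _ => u) Prod.snd f)
              (F₂.filter (fun f => MFInduced f Y) : Finset (MixedEdge V)) (Y : Set V) := by
            intro y hy
            obtain ⟨f, hfmem, sv, rfl⟩ := hcover y hy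
            exact ⟨Sum.inr (sv, y), hfmem, rfl⟩
          have hcard : Y.card ≤ (F₂.filter (fun f => MFInduced f Y)).card :=
            Finset.card_le_card_of_surjOn _ hsurj
          have := forest_bound hF₂ hYne
          omega
    · -- no bad set: simply add the arc
      have hmf := add_arc hF₁ hucov hf₂gnd
        (fun Z ht hu h => hbad ⟨Z, ht, hu, h⟩)
      refine ⟨u, Or.inr ⟨hu2, hu1⟩, _, hmf, ?_⟩
      rw [boundary_insert_eq, covSet_inr]
      exact sd1 hu1

end
lemma sd6 {B : Finset V} {u w : V} (hu : u ∈ B) (hw : w ∈ B) :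
    B \ {u, w} = symmDiff B {u, w} := by
  ext v
  simp only [Finset.mem_symmDiff, Finset.mem_insert, Finset.mem_singleton, Finset.mem_sdiff]
  by_cases hvu : v = u <;> by_cases hvw : v = w <;> simp_all

lemma sd7 {B : Finset V} {u : V} (hu : u ∈ B) :
    B \ {u} = symmDiff B {u, u} := by
  ext v
  simp only [Finset.mem_symmDiff, Finset.mem_insert, Finset.mem_singleton, Finset.mem_sdiff]
  by_cases hvu : v = u <;> simp_all

lemma sd_comb5 {B : Finset V} {u w : V} (hu : u ∈ B) (hw : w ∈ B) (huw : u ≠ w) :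
    symmDiff (B \ {u, w}) {w, w} = symmDiff B {u, u} := by
  ext v
  simp only [Finset.mem_symmDiff, Finset.mem_insert, Finset.mem_singleton, Finset.mem_sdiff]
  by_cases hvu : v = u <;> by_cases hvw : v = w <;> simp_all

lemma sd_comb6 {B : Finset V} {u w w' : V} (hu : u ∈ B) (hw : w ∈ B) (huw : u ≠ w)
    (h1 : w' ≠ u) (h2 : w' ≠ w) :
    symmDiff (B \ {u, w}) {w, w'} = symmDiff B {u, w'} := by
  ext v
  simp only [Finset.mem_symmDiff, Finset.mem_insert, Finset.mem_singleton, Finset.mem_sdiff]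
  by_cases hvu : v = u <;> by_cases hvw : v = w <;> by_cases hvw' : v = w' <;>
    simp_all <;> tauto

section
variable [Fintype V] {E : Finset (Sym2 V)} {A : Finset (V × V)}
  {F F₁ F₂ : Finset (MixedEdge V)}

lemma lemA (hF₁ : IsMatchingForest E A F₁) (hF₂ : IsMatchingForest E A F₂)
    {u : V} (hu1 : u ∈ mfBoundary F₁) (hu2 : u ∉ mfBoundary F₂) :
    ∃ u', ((u' ∈ mfBoundary F₁ ∧ u' ∉ mfBoundary F₂) ∨
           (u' ∈ mfBoundary F₂ ∧ u' ∉ mfBoundary F₁)) ∧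
      ∃ F, IsMatchingForest E A F ∧
        mfBoundary F = symmDiff (mfBoundary F₁) {u, u'} := by
  obtain ⟨f₁, hf₁F, hf₁u⟩ := mem_mfBoundary.mp hu1
  have hmfE : IsMatchingForest E A (F₁.erase f₁) :=
    mf_subset hF₁ (Finset.erase_subset _ _)
  rcases f₁ with e | ⟨σ, τ⟩
  · -- `f₁` is an undirected edge `{u, w}`
    obtain ⟨w, rfl⟩ := Sym2.mem_iff_exists.mp (covers_inl.mp hf₁u)
    have huw : u ≠ w := by
      rintro rfl
      exact no_loop_inl hF₁ u hf₁F
    have hw1 : w ∈ mfBoundary F₁ :=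
      mem_mfBoundary.mpr ⟨_, hf₁F, covers_inl.mpr (by simp)⟩
    have hbE : mfBoundary (F₁.erase (Sum.inl s(u,w))) = mfBoundary F₁ \ {u, w} := by
      rw [boundary_erase_eq hF₁ hf₁F, covSet_inl]
    have huE : u ∉ mfBoundary (F₁.erase (Sum.inl s(u,w))) := by
      rw [hbE]
      simp
    have hwE : w ∉ mfBoundary (F₁.erase (Sum.inl s(u,w))) := by
      rw [hbE]
      simp
    by_cases hw2 : w ∈ mfBoundary F₂
    · -- recurse via `lemB`
      obtain ⟨w', hw'mem, F'', hF'', hbF''⟩ :=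
        lemB hF₂ ((F₁.erase (Sum.inl s(u,w))) \ F₂).card _ le_rfl hmfE w hw2 hwE
      have hw'u : w' ≠ u := by
        rintro rfl
        rcases hw'mem with ⟨h, _⟩ | ⟨h, _⟩
        · exact huE h
        · exact hu2 h
      by_cases hw'w : w' = w
      · subst hw'w
        refine ⟨u, Or.inl ⟨hu1, hu2⟩, F'', hF'', ?_⟩
        rw [hbF'', hbE]
        exact sd_comb5 hu1 hw1 huw
      · refine ⟨w', ?_, F'', hF'', ?_⟩
        · rcases hw'mem with ⟨h1, h2⟩ | ⟨h1, h2⟩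
          · rw [hbE] at h1
            exact Or.inl ⟨(Finset.mem_sdiff.mp h1).1, h2⟩
          · refine Or.inr ⟨h1, fun hw'B => h2 ?_⟩
            rw [hbE]
            refine Finset.mem_sdiff.mpr ⟨hw'B, ?_⟩
            simp only [Finset.mem_insert, Finset.mem_singleton]
            push_neg
            exact ⟨hw'u, hw'w⟩
        · rw [hbF'', hbE]
          exact sd_comb6 hu1 hw1 huw hw'u hw'w
    · -- `w ∉ ∂F₂` : just delete the edge
      refine ⟨w, Or.inl ⟨hw1, hw2⟩, _, hmfE, ?_⟩
      rw [boundary_erase_eq hF₁ hf₁F, covSet_inl]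
      exact sd6 hu1 hw1
  · -- `f₁` is an arc with head `u` : just delete it
    have hτ : u = τ := (covers_inr.mp hf₁u).symm
    subst hτ
    refine ⟨u, Or.inl ⟨hu1, hu2⟩, _, hmfE, ?_⟩
    rw [boundary_erase_eq hF₁ hf₁F, covSet_inr]
    exact sd7 hu1
end


/-- The sets of vertices covered by matching forests of a mixed
graph form a delta-matroid. -/
theorem matchingForest_boundaries_deltaMatroid
    {V : Type*} [Fintype V] (E : Finset (Sym2 V)) (A : Finset (V × V))
    (U₁ U₂ : Finset V)
    (hU₁ : ∃ F, IsMatchingForest E A F ∧ mfBoundary F = U₁)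
    (hU₂ : ∃ F, IsMatchingForest E A F ∧ mfBoundary F = U₂) :
    ∀ u ∈ symmDiff U₁ U₂, ∃ u' ∈ symmDiff U₁ U₂,
      ∃ F, IsMatchingForest E A F ∧ mfBoundary F = symmDiff U₁ {u, u'} := by
  obtain ⟨F₁, hF₁, rfl⟩ := hU₁
  obtain ⟨F₂, hF₂, rfl⟩ := hU₂
  intro u hu
  rw [Finset.mem_symmDiff] at hu
  rcases hu with ⟨hu1, hu2⟩ | ⟨hu2, hu1⟩
  · obtain ⟨u', hu'mem, F, hF, hbF⟩ := lemA hF₁ hF₂ hu1 hu2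
    exact ⟨u', Finset.mem_symmDiff.mpr hu'mem, F, hF, hbF⟩
  · obtain ⟨u', hu'mem, F, hF, hbF⟩ :=
      lemB hF₂ (F₁ \ F₂).card F₁ le_rfl hF₁ u hu2 hu1
    exact ⟨u', Finset.mem_symmDiff.mpr hu'mem, F, hF, hbF⟩
end

section
/- The bound 2 in the equitable matching forest partition theorem is tight: if G=(V,E,A) is a mixed graph consisting of an undirected path with an odd number of edges and no directed edges (A = ∅), then for every partition of E into 2 matching forests F_1, F_2 of G, it holds that ||∂F_1| − |∂F_2|| ≥ 2. -/
open Finset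
open scoped Classical

variable {V : Type*}

/-!
Without arcs a matching forest is a matching, so `|∂F| = 2|F|` by counting the two endpoints
of each edge. A partition of the `n` path edges into `F₁, F₂` has `|F₁| + |F₂| = n` odd, hence
`|F₁| ≠ |F₂|` and `||∂F₁| - |∂F₂|| = 2 ||F₁| - |F₂|| ≥ 2`.
-/

section Boundary

variable [Fintype V]

lemma filter_mfCovers_inl (e : Sym2 V) : univ.filter (MFCovers (Sum.inl e)) = e.toFinset := by
  ext v
  simp [MFCovers]

lemma card_filter_mfCovers_eq_ite {F : Finset (MixedEdge V)} {v : V}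
    (hv : (F.filter (fun f => MFCovers f v)).card ≤ 1) :
    (F.filter (fun f => MFCovers f v)).card = if v ∈ mfBoundary F then 1 else 0 := by
  split_ifs with h
  · refine le_antisymm hv (card_pos.mpr ?_)
    obtain ⟨f, hf, hfv⟩ := (mem_filter.mp h).2
    exact ⟨f, mem_filter.mpr ⟨hf, hfv⟩⟩
  · refine card_eq_zero.mpr (filter_eq_empty_iff.mpr fun f hf hfv => h ?_)
    exact mem_filter.mpr ⟨mem_univ v, f, hf, hfv⟩

lemma card_mfBoundary_eq_two_mul {E : Finset (Sym2 V)} (hE : ∀ e ∈ E, ¬ e.IsDiag)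
    {F : Finset (MixedEdge V)} (hF : F ⊆ mfGround E ∅)
    (hdeg : ∀ v : V, (F.filter (fun f => MFCovers f v)).card ≤ 1) :
    (mfBoundary F).card = 2 * F.card := by
  have hcover : ∀ f ∈ F, (univ.filter (MFCovers f)).card = 2 := by
    intro f hf
    obtain ⟨e, he, rfl⟩ : ∃ e ∈ E, Sum.inl e = f := by
      simpa [mfGround] using hF hf
    rw [filter_mfCovers_inl, Sym2.card_toFinset_of_not_isDiag e (hE e he)]
  calc (mfBoundary F).card
      = ∑ v, if v ∈ mfBoundary F then 1 else 0 := by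
        rw [sum_boole, filter_mem_eq_inter, univ_inter, Nat.cast_id]
    _ = ∑ v, (F.filter (fun f => MFCovers f v)).card :=
        sum_congr rfl fun v _ => (card_filter_mfCovers_eq_ite (hdeg v)).symm
    _ = ∑ f ∈ F, (univ.filter (MFCovers f)).card :=
        (sum_card_bipartiteAbove_eq_sum_card_bipartiteBelow MFCovers).symm
    _ = 2 * F.card := by rw [sum_congr rfl hcover, sum_const, smul_eq_mul, mul_comm]

end Boundary

lemma card_mfGround_empty (E : Finset (Sym2 V)) :
    (mfGround E (∅ : Finset (V × V))).card = E.card := by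
  simp [mfGround, card_image_of_injective _ Sum.inl_injective]

def pathEdges (n : ℕ) : Finset (Sym2 (Fin (n + 1))) :=
  univ.image fun i : Fin n => s(i.castSucc, i.succ)

lemma not_isDiag_of_mem_pathEdges {n : ℕ} {e : Sym2 (Fin (n + 1))} (he : e ∈ pathEdges n) :
    ¬ e.IsDiag := by
  obtain ⟨i, -, rfl⟩ := mem_image.mp he
  simp [Fin.ext_iff]

lemma card_pathEdges (n : ℕ) : (pathEdges n).card = n := by
  rw [pathEdges, card_image_of_injective, card_univ, Fintype.card_fin]
  intro i j hij
  rcases Sym2.eq_iff.mp hij with ⟨h, -⟩ | ⟨h, h'⟩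
  · exact Fin.castSucc_injective _ h
  · simp only [Fin.ext_iff, Fin.val_castSucc, Fin.val_succ] at h h'
    omega

/-- The bound `2` is tight: for a mixed graph consisting of an
undirected path with an odd number `n` of edges and no arcs, every partition of
the edge set into two matching forests `F₁, F₂` satisfies `||∂F₁| - |∂F₂|| ≥ 2`. -/
theorem equitable_matchingForest_bound_tight
    (n : ℕ) (hn : Odd n)
    (E : Finset (Sym2 (Fin (n + 1))))
    (hE : E = (Finset.univ : Finset (Fin n)).image
      (fun i => s(Fin.castSucc i, Fin.succ i)))
    (F₁ F₂ : Finset (MixedEdge (Fin (n + 1))))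
    (h₁ : IsMatchingForest E (∅ : Finset (Fin (n + 1) × Fin (n + 1))) F₁)
    (h₂ : IsMatchingForest E (∅ : Finset (Fin (n + 1) × Fin (n + 1))) F₂)
    (hd : Disjoint F₁ F₂)
    (hu : F₁ ∪ F₂ = mfGround E (∅ : Finset (Fin (n + 1) × Fin (n + 1)))) :
    2 ≤ |((mfBoundary F₁).card : ℤ) - ((mfBoundary F₂).card : ℤ)| := by
  replace hE : E = pathEdges n := hE
  subst hE
  have hloop : ∀ e ∈ pathEdges n, ¬ e.IsDiag := fun e => not_isDiag_of_mem_pathEdges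
  have hsum : F₁.card + F₂.card = n := by
    rw [← card_union_of_disjoint hd, hu, card_mfGround_empty, card_pathEdges]
  rw [card_mfBoundary_eq_two_mul hloop h₁.1 h₁.2.1, card_mfBoundary_eq_two_mul hloop h₂.1 h₂.2.1]
  obtain ⟨k, rfl⟩ := hn
  rw [le_abs']
  omega
end

section
/- Let D=(V,A) be a finite digraph and V' ⊆ V a vertex subset. Then there exists a branching B ⊆ A with R(B) = V' if and only if |V' ∩ X| ≥ 1 for every source component X of D. -/
open Finset
open scoped Classical Pointwise

variable {V : Type*}

private def pathLen (A : Finset (V × V)) : ℕ → V → V → Prop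
  | 0, u, v => u = v
  | n+1, u, v => ∃ w, pathLen A n u w ∧ (w, v) ∈ A

private lemma reaches_iff_pathLen (A : Finset (V × V)) (u v : V) :
    Reaches A u v ↔ ∃ n, pathLen A n u v := by
  constructor
  · intro h
    induction h with
    | refl => exact ⟨0, rfl⟩
    | tail _ hab ih => obtain ⟨n, hn⟩ := ih; exact ⟨n+1, _, hn, hab⟩
  · rintro ⟨n, hn⟩
    induction n generalizing v with
    | zero => cases hn; exact Relation.ReflTransGen.refl
    | succ n ih => obtain ⟨w, hw, ha⟩ := hn; exact Relation.ReflTransGen.tail (ih w hw) ha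

/-- Every vertex is reachable from some source component. -/
private lemma exists_source_reaching [Fintype V] (A : Finset (V × V)) (v : V) :
    ∃ X : Finset V, IsSourceComponent A X ∧ ∀ u ∈ X, Reaches A u v := by
  classical
  set S := univ.filter (fun u => Reaches A u v) with hS
  have hvS : v ∈ S := by
    simp only [hS, mem_filter, mem_univ, true_and]
    exact Relation.ReflTransGen.refl
  obtain ⟨u, huS, humin⟩ := S.exists_min_image
    (fun u => (univ.filter (fun w => Reaches A w u)).card) ⟨v, hvS⟩
  have huv : Reaches A u v := by simpa [hS] using huS
  refine ⟨univ.filter (fun w => Reaches A w u ∧ Reaches A u w), ⟨⟨u, fun w => by simp⟩, ?_⟩, ?_⟩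
  · rintro ⟨w, x⟩ ha hx
    simp only [mem_filter, mem_univ, true_and] at hx ⊢
    have hwu : Reaches A w u := Relation.ReflTransGen.head ha hx.1
    have hwS : w ∈ S := by
      simp only [hS, mem_filter, mem_univ, true_and]
      exact hwu.trans huv
    have hsub : univ.filter (fun t => Reaches A t w) ⊆ univ.filter (fun t => Reaches A t u) := by
      intro t ht
      simp only [mem_filter, mem_univ, true_and] at ht ⊢
      exact ht.trans hwu
    have heq := Finset.eq_of_subset_of_card_le hsub (humin w hwS)
    have hu : u ∈ univ.filter (fun t => Reaches A t w) := by
      rw [heq]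
      exact mem_filter.mpr ⟨mem_univ u, Relation.ReflTransGen.refl⟩
    simp only [mem_filter, mem_univ, true_and] at hu
    exact ⟨hwu, hu⟩
  · intro w hw
    simp only [mem_filter, mem_univ, true_and] at hw
    exact hw.1.trans huv

/-- There is a branching with root set `V'` iff every source
component contains a vertex of `V'`. -/
theorem branching_prescribed_roots
    {V : Type*} [Fintype V] (A : Finset (V × V)) (V' : Finset V) :
    (∃ B : Finset (V × V), IsBranching A B ∧ roots B = V') ↔
    ∀ X : Finset V, IsSourceComponent A X → 1 ≤ (V' ∩ X).card := by
  classical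
  constructor
  · rintro ⟨B, ⟨hBA, _hdeg, hforest⟩, hroots⟩ X ⟨⟨v, hv⟩, hclosed⟩
    have hvX : v ∈ X := (hv v).mpr ⟨Relation.ReflTransGen.refl, Relation.ReflTransGen.refl⟩
    by_contra hcon
    have hempty : V' ∩ X = ∅ := by
      rw [← Finset.card_eq_zero]; omega
    -- every x ∈ X is a head of some arc of B, with tail in X
    have harc : ∀ x ∈ X, ∃ a ∈ B.filter (fun a => a.1 ∈ X ∧ a.2 ∈ X), a.2 = x := by
      intro x hx
      have hxV' : x ∉ V' := by
        intro h
        have : x ∈ V' ∩ X := mem_inter.mpr ⟨h, hx⟩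
        simp [hempty] at this
      have hxh : x ∈ heads B := by
        by_contra h
        exact hxV' (hroots ▸ (mem_sdiff.mpr ⟨mem_univ x, h⟩))
      obtain ⟨a, haB, ha2⟩ := Finset.mem_image.mp hxh
      refine ⟨a, mem_filter.mpr ⟨haB, ?_, ha2 ▸ hx⟩, ha2⟩
      exact hclosed a (hBA haB) (ha2 ▸ hx)
    choose f hf1 hf2 using harc
    have hinj : ∀ (x) (hx : x ∈ X) (y) (hy : y ∈ X), f x hx = f y hy → x = y := by
      intro x hx y hy h
      rw [← hf2 x hx, ← hf2 y hy, h]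
    have hcard : X.card ≤ (B.filter (fun a => a.1 ∈ X ∧ a.2 ∈ X)).card := by
      have := Finset.card_le_card_of_injOn
        (s := X.attach) (t := B.filter (fun a => a.1 ∈ X ∧ a.2 ∈ X))
        (fun x => f x.1 x.2)
        (fun x _ => hf1 x.1 x.2)
        (fun x _ y _ h => Subtype.ext (hinj x.1 x.2 y.1 y.2 h))
      simpa using this
    have hX1 : 1 ≤ X.card := Finset.card_pos.mpr ⟨v, hvX⟩
    have := hforest X ⟨v, hvX⟩
    omega
  · intro hyp
    -- every vertex is reachable from V'
    have reach : ∀ v : V, ∃ x ∈ V', Reaches A x v := by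
      intro v
      obtain ⟨X, hX, hXr⟩ := exists_source_reaching A v
      obtain ⟨x, hx⟩ := Finset.card_pos.mp (hyp X hX)
      rw [mem_inter] at hx
      exact ⟨x, hx.1, hXr x hx.2⟩
    have hex : ∀ v : V, ∃ n, ∃ x ∈ V', pathLen A n x v := by
      intro v
      obtain ⟨x, hx, hr⟩ := reach v
      obtain ⟨n, hn⟩ := (reaches_iff_pathLen A x v).mp hr
      exact ⟨n, x, hx, hn⟩
    set d : V → ℕ := fun v => Nat.find (hex v) with hd
    have hdpos : ∀ v, v ∉ V' → 0 < d v := by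
      intro v hv
      rcases Nat.eq_zero_or_pos (d v) with h | h
      · exfalso
        obtain ⟨x, hx, hp⟩ := Nat.find_spec (hex v)
        rw [show Nat.find (hex v) = 0 from h] at hp
        exact hv (hp ▸ hx)
      · exact h
    have hpar : ∀ v : V, ∃ w, v ∉ V' → (w, v) ∈ A ∧ d w < d v := by
      intro v
      by_cases hv : v ∈ V'
      · exact ⟨v, fun h => absurd hv h⟩
      obtain ⟨x, hx, hp⟩ := Nat.find_spec (hex v)
      obtain ⟨m, hm⟩ : ∃ m, Nat.find (hex v) = m + 1 :=
        ⟨_, (Nat.succ_pred_eq_of_pos (hdpos v hv)).symm⟩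
      rw [hm] at hp
      obtain ⟨w, hw, ha⟩ := hp
      refine ⟨w, fun _ => ⟨ha, ?_⟩⟩
      have h1 : d w ≤ m := Nat.find_min' (hex w) ⟨x, hx, hw⟩
      have h2 : d v = m + 1 := hm
      omega
    choose p hp using hpar
    set B := A.filter (fun a => a.2 ∉ V' ∧ a.1 = p a.2) with hB
    have memB : ∀ v, v ∉ V' → (p v, v) ∈ B := by
      intro v hv
      exact mem_filter.mpr ⟨(hp v hv).1, hv, rfl⟩
    have headB : ∀ a ∈ B, a.2 ∉ V' ∧ a = (p a.2, a.2) := by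
      intro a ha
      obtain ⟨_, h1, h2⟩ := mem_filter.mp ha
      exact ⟨h1, Prod.ext h2 rfl⟩
    refine ⟨B, ⟨filter_subset _ _, ?_, ?_⟩, ?_⟩
    · -- indegree ≤ 1
      intro v
      unfold inDeg
      refine Finset.card_le_one.mpr ?_
      intro a ha b hb
      rw [mem_filter] at ha hb
      rw [(headB a ha.1).2, (headB b hb.1).2, ha.2, hb.2]
    · -- forest
      intro X hX
      obtain ⟨m, hmX, hmmin⟩ := X.exists_min_image d hX
      have hmaps : ∀ a ∈ B.filter (fun a => a.1 ∈ X ∧ a.2 ∈ X), a.2 ∈ X.erase m := by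
        intro a ha
        rw [mem_filter] at ha
        refine mem_erase.mpr ⟨?_, ha.2.2⟩
        intro h
        obtain ⟨hnv, hae⟩ := headB a ha.1
        have hlt : d (p a.2) < d a.2 := (hp a.2 hnv).2
        have ha1 : a.1 ∈ X := ha.2.1
        rw [hae] at ha1
        have hle := hmmin (p a.2) ha1
        have hda : d a.2 = d m := by rw [h]
        omega
      have hinj : ∀ a ∈ B.filter (fun a => a.1 ∈ X ∧ a.2 ∈ X),
          ∀ b ∈ B.filter (fun a => a.1 ∈ X ∧ a.2 ∈ X), a.2 = b.2 → a = b := by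
        intro a ha b hb h
        rw [(headB a (mem_filter.mp ha).1).2, (headB b (mem_filter.mp hb).1).2, h]
      calc (B.filter (fun a => a.1 ∈ X ∧ a.2 ∈ X)).card
          ≤ (X.erase m).card := Finset.card_le_card_of_injOn Prod.snd hmaps hinj
        _ = X.card - 1 := Finset.card_erase_of_mem hmX
    · -- roots B = V'
      have hheads : heads B = univ \ V' := by
        ext v
        simp only [heads, Finset.mem_image, mem_sdiff, mem_univ, true_and]
        constructor
        · rintro ⟨a, haB, rfl⟩
          exact (headB a haB).1
        · intro hv
          exact ⟨(p v, v), memB v hv, rfl⟩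
      rw [roots, hheads, Finset.sdiff_sdiff_self_left, Finset.univ_inter]
end

section
/- Let D=(V,A) be a finite digraph, b: V → ℤ_{++} a positive integer vector, and suppose A can be partitioned into two b-branchings B_1, B_2 ⊆ A. Let b'_1, b'_2: V → ℤ_+ be vectors satisfying b'_1 ≤ b, b'_2 ≤ b, and b'_1 + b'_2 = d⁻_A (the indegree vector of A). Then A can be partitioned into two b-branchings B'_1 and B'_2 with d⁻_{B'_1} = b'_1 and d⁻_{B'_2} = b'_2 if and only if b'_1(X) < b(X) and b'_2(X) < b(X) for each source component X of D. -/
open Finset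
open scoped Classical Pointwise

variable {V : Type*}

/-!
Necessity: no arc enters a source component `X`, so a `b`-branching `B ⊆ A` with indegree
vector `c` has `c(X) = |B[X]| ≤ b(X) - 1`.

Sufficiency: let `Vᵢ` be the set of vertices where `bᵢ' = b`. By the source-component
condition every nonempty subset of `Vᵢ` is entered by an arc of `A`, and since `A[X]` is split
between two `b`-branchings, every nonempty subset of `V₁ ∩ V₂` is entered by at least two arcs.
As in Edmonds' disjoint branchings theorem, this cut condition yields disjoint branchings
`F₁, F₂ ⊆ A` such that `Fᵢ` enters every nonempty subset of `Vᵢ`; they are grown one arc at a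
time, each new arc chosen so that it enters no tight set. Completing `F₁` to an arc set `B`
with indegree vector `b₁'` that avoids `F₂` gives the partition `B, A \ B`: a set `X` on which
the indegree of a part reaches `b` lies in `Vᵢ`, so it is entered by `Fᵢ`, which is exactly
the `b`-branching condition `|Bᵢ[X]| ≤ b(X) - 1`.
-/

noncomputable def entering (A : Finset (V × V)) (X : Finset V) : Finset (V × V) :=
  A.filter fun a => a.2 ∈ X ∧ a.1 ∉ X

lemma entering_mono {A A' : Finset (V × V)} (h : A ⊆ A') (X : Finset V) :
    entering A X ⊆ entering A' X :=
  filter_subset_filter _ h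

lemma entering_eq_empty_iff {A : Finset (V × V)} {X : Finset V} :
    entering A X = ∅ ↔ ∀ a ∈ A, a.2 ∈ X → a.1 ∈ X := by
  simp [entering, filter_eq_empty_iff]

lemma entering_erase (A : Finset (V × V)) (a : V × V) (X : Finset V) :
    entering (A.erase a) X = (entering A X).erase a :=
  filter_erase _ _ _

lemma entering_erase_of_notMem {A : Finset (V × V)} {a : V × V} {X : Finset V} (h : a.2 ∉ X) :
    entering (A.erase a) X = entering A X := by
  rw [entering_erase, erase_eq_of_notMem fun ha => h (mem_filter.1 ha).2.1]

lemma card_entering_inter_add_card_entering_union_le (A : Finset (V × V)) (X Y : Finset V) :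
    #(entering A (X ∩ Y)) + #(entering A (X ∪ Y)) ≤ #(entering A X) + #(entering A Y) := by
  simp only [entering, card_filter, ← sum_add_distrib]
  refine sum_le_sum fun a _ => ?_
  simp only [mem_inter, mem_union]
  split_ifs <;> tauto

lemma card_inside_add_card_entering (B : Finset (V × V)) (X : Finset V) :
    #(B.filter fun a => a.1 ∈ X ∧ a.2 ∈ X) + #(entering B X) = ∑ v ∈ X, inDeg B v := by
  have h := sum_card_fiberwise_eq_card_filter B X Prod.snd
  rw [← card_filter_add_card_filter_not (fun a => a.1 ∈ X), filter_filter, filter_filter] at h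
  simp only [inDeg, entering, h, and_comm]

lemma inDeg_sdiff {A B : Finset (V × V)} (h : B ⊆ A) (v : V) :
    inDeg (A \ B) v = inDeg A v - inDeg B v := by
  have : (A \ B).filter (·.2 = v) = A.filter (·.2 = v) \ B.filter (·.2 = v) := by
    ext a
    simp only [mem_filter, mem_sdiff]
    tauto
  rw [inDeg, this, card_sdiff_of_subset (filter_subset_filter _ h), inDeg, inDeg]

lemma Reaches.mem_of_closed {A : Finset (V × V)} {X : Finset V}
    (hX : ∀ a ∈ A, a.2 ∈ X → a.1 ∈ X) {u v : V} (h : Reaches A u v) (hv : v ∈ X) : u ∈ X := by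
  induction h using Relation.ReflTransGen.head_induction_on with
  | refl => exact hv
  | head hu _ ih => exact hX _ hu ih

lemma exists_isSourceComponent_subset {A : Finset (V × V)} {X : Finset V} (hne : X.Nonempty)
    (hX : ∀ a ∈ A, a.2 ∈ X → a.1 ∈ X) : ∃ S ⊆ X, IsSourceComponent A S := by
  -- the ancestors of a vertex `v` with fewest ancestors are all reached from `v`
  obtain ⟨v, hvX, hmin⟩ := exists_min_image X (fun v => #(X.filter (Reaches A · v))) hne
  have hback : ∀ u, Reaches A u v → Reaches A v u := by
    intro u hu
    have hsub : X.filter (Reaches A · u) ⊆ X.filter (Reaches A · v) := fun w hw => by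
      rw [mem_filter] at hw ⊢
      exact ⟨hw.1, hw.2.trans hu⟩
    have heq := eq_of_subset_of_card_le hsub (hmin u (hu.mem_of_closed hX hvX))
    exact (mem_filter.1 (heq ▸ mem_filter.2 ⟨hvX, .refl⟩ : v ∈ X.filter (Reaches A · u))).2
  refine ⟨X.filter (Reaches A · v), filter_subset _ _, ⟨v, fun u => ?_⟩, fun a ha h => ?_⟩
  · rw [mem_filter]
    exact ⟨fun h => ⟨h.2, hback u h.2⟩, fun h => ⟨h.1.mem_of_closed hX hvX, h.1⟩⟩
  · rw [mem_filter] at h ⊢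
    exact ⟨hX a ha h.1, .head ha h.2⟩

lemma IsSourceComponent.nonempty {A : Finset (V × V)} {X : Finset V}
    (hX : IsSourceComponent A X) : X.Nonempty :=
  let ⟨⟨v, hv⟩, _⟩ := hX
  ⟨v, (hv v).2 ⟨.refl, .refl⟩⟩

lemma entering_nonempty_of_forall_isSourceComponent {A : Finset (V × V)} {b c : V → ℕ}
    (hsrc : ∀ S, IsSourceComponent A S → ∑ v ∈ S, c v < ∑ v ∈ S, b v)
    {X : Finset V} (hX : X.Nonempty) (htight : ∀ v ∈ X, c v = b v) : (entering A X).Nonempty := by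
  by_contra hempty
  obtain ⟨S, hSX, hS⟩ := exists_isSourceComponent_subset hX
    (entering_eq_empty_iff.1 (not_nonempty_iff_eq_empty.1 hempty))
  exact (hsrc S hS).ne (sum_congr rfl fun v hv => htight v (hSX hv))

lemma IsBBranching.sum_inDeg_lt {A B : Finset (V × V)} {b : V → ℕ} (hB : IsBBranching A b B)
    {X : Finset V} (hX : ∀ a ∈ A, a.2 ∈ X → a.1 ∈ X) (hbX : 0 < ∑ v ∈ X, b v) :
    ∑ v ∈ X, inDeg B v < ∑ v ∈ X, b v := by
  have hent : entering B X = ∅ :=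
    subset_empty.1 (entering_eq_empty_iff.2 hX ▸ entering_mono hB.1 X)
  have hsplit := card_inside_add_card_entering B X
  rw [hent, card_empty, add_zero] at hsplit
  have := hB.2.2 X (nonempty_of_sum_ne_zero hbX.ne')
  omega

lemma isBBranching_of_entering_nonempty {A B : Finset (V × V)} {b : V → ℕ} (hBA : B ⊆ A)
    (hdeg : ∀ v, inDeg B v ≤ b v)
    (hent : ∀ X : Finset V, X.Nonempty → (∀ v ∈ X, inDeg B v = b v) → (entering B X).Nonempty) :
    IsBBranching A b B := by
  refine ⟨hBA, hdeg, fun X hX => ?_⟩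
  have hsplit := card_inside_add_card_entering B X
  rcases (sum_le_sum fun v _ => hdeg v : ∑ v ∈ X, inDeg B v ≤ _).lt_or_eq with hlt | heq
  · omega
  · have := (hent X hX ((sum_eq_sum_iff_of_le fun v _ => hdeg v).1 heq)).card_pos
    omega

lemma two_le_card_entering {A B₁ B₂ : Finset (V × V)} {b : V → ℕ}
    (hB₁ : IsBBranching A b B₁) (hB₂ : IsBBranching A b B₂) (hB : Disjoint B₁ B₂)
    (hA : B₁ ∪ B₂ = A) {X : Finset V} (hbX : 0 < ∑ v ∈ X, b v)
    (hdeg : ∀ v ∈ X, inDeg A v = 2 * b v) : 2 ≤ #(entering A X) := by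
  have hX := nonempty_of_sum_ne_zero hbX.ne'
  have hinside : #(A.filter fun a => a.1 ∈ X ∧ a.2 ∈ X) =
      #(B₁.filter fun a => a.1 ∈ X ∧ a.2 ∈ X) + #(B₂.filter fun a => a.1 ∈ X ∧ a.2 ∈ X) := by
    rw [← hA, filter_union,
      card_union_of_disjoint (hB.mono (filter_subset _ _) (filter_subset _ _))]
  have hsplit := card_inside_add_card_entering A X
  rw [sum_congr rfl hdeg, ← mul_sum] at hsplit
  have := hB₁.2.2 X hX
  have := hB₂.2.2 X hX
  omega

/-- Edmonds' cut condition for two disjoint branchings covering `V₁` and `V₂`. -/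
structure CutCondition (A : Finset (V × V)) (V₁ V₂ : Finset V) : Prop where
  left : ∀ X : Finset V, X.Nonempty → X ⊆ V₁ → 1 ≤ #(entering A X)
  right : ∀ X : Finset V, X.Nonempty → X ⊆ V₂ → 1 ≤ #(entering A X)
  both : ∀ X : Finset V, X.Nonempty → X ⊆ V₁ → X ⊆ V₂ → 2 ≤ #(entering A X)

lemma CutCondition.symm {A : Finset (V × V)} {V₁ V₂ : Finset V} (h : CutCondition A V₁ V₂) :
    CutCondition A V₂ V₁ :=
  ⟨h.right, h.left, fun X hX h₂ h₁ => h.both X hX h₁ h₂⟩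

section CutCondition

variable {A : Finset (V × V)} {V₁ V₂ : Finset V}

lemma card_entering_inter_eq_one {W X Y : Finset V}
    (hW : ∀ Z : Finset V, Z.Nonempty → Z ⊆ W → 1 ≤ #(entering A Z)) (hX : X ⊆ W) (hY : Y ⊆ W)
    (hX₁ : #(entering A X) = 1) (hY₁ : #(entering A Y) = 1) (hXY : (X ∩ Y).Nonempty) :
    #(entering A (X ∩ Y)) = 1 := by
  have := card_entering_inter_add_card_entering_union_le A X Y
  have := hW _ hXY (inter_subset_left.trans hX)
  have := hW _ (hXY.mono inter_subset_union) (union_subset hX hY)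
  omega

/- If every arc entering `V₁` entered a tight subset of `V₂`, take a minimal tight `X₀ ⊆ V₂`
entered by such an arc. Uncrossing with the tight sets of the arcs entering `V₁ ∩ X₀` shows that
each of these arcs enters `X₀`; but at least two arcs enter `V₁ ∩ X₀`. -/
lemma CutCondition.exists_safe_arc (h : CutCondition A V₁ V₂) (hV₁ : V₁.Nonempty) :
    ∃ a ∈ entering A V₁, ∀ X ⊆ V₂, a ∈ entering A X → #(entering A X) ≠ 1 := by
  by_contra! hbad
  obtain ⟨a, ha⟩ := card_pos.1 (h.left V₁ hV₁ subset_rfl)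
  obtain ⟨X, hXV₂, haX, hX₁⟩ := hbad a ha
  obtain ⟨X₀, ⟨hX₀V₂, hX₀₁, a₀, ha₀V₁, ha₀X₀⟩, hmin⟩ := exists_minimal_of_wellFoundedLT
    (fun X => X ⊆ V₂ ∧ #(entering A X) = 1 ∧ ∃ a ∈ entering A V₁, a ∈ entering A X)
    ⟨X, hXV₂, hX₁, a, ha, haX⟩
  have hY : 2 ≤ #(entering A (V₁ ∩ X₀)) :=
    h.both _ ⟨a₀.2, mem_inter.2 ⟨(mem_filter.1 ha₀V₁).2.1, (mem_filter.1 ha₀X₀).2.1⟩⟩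
      inter_subset_left (inter_subset_right.trans hX₀V₂)
  suffices entering A (V₁ ∩ X₀) ⊆ entering A X₀ by
    have := card_le_card this
    omega
  intro e he
  simp only [entering, mem_filter, mem_inter, not_and] at he ⊢
  refine ⟨he.1, he.2.1.2, fun he₁ => ?_⟩
  have heV₁ : e ∈ entering A V₁ :=
    mem_filter.2 ⟨he.1, he.2.1.1, fun h => he.2.2 h he₁⟩
  obtain ⟨X', hX'V₂, heX', hX'₁⟩ := hbad e heV₁
  have heX' := mem_filter.1 heX'
  have hmeet := card_entering_inter_eq_one h.right hX₀V₂ hX'V₂ hX₀₁ hX'₁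
    ⟨e.2, mem_inter.2 ⟨he.2.1.2, heX'.2.1⟩⟩
  have hX₀X' : X₀ ⊆ X₀ ∩ X' := hmin ⟨inter_subset_left.trans hX₀V₂, hmeet, e, heV₁,
    mem_filter.2 ⟨he.1, mem_inter.2 ⟨he.2.1.2, heX'.2.1⟩, fun h => heX'.2.2 (mem_inter.1 h).2⟩⟩
    inter_subset_left
  exact heX'.2.2 (mem_inter.1 (hX₀X' he₁)).2

lemma CutCondition.erase (h : CutCondition A V₁ V₂) {a : V × V}
    (hsafe : ∀ X ⊆ V₂, a ∈ entering A X → #(entering A X) ≠ 1) :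
    CutCondition (A.erase a) (V₁.erase a.2) V₂ where
  left X hX hXV₁ := by
    rw [entering_erase_of_notMem fun ha => notMem_erase a.2 V₁ (hXV₁ ha)]
    exact h.left X hX (hXV₁.trans (erase_subset _ _))
  right X hX hXV₂ := by
    have := h.right X hX hXV₂
    rw [entering_erase]
    by_cases ha : a ∈ entering A X
    · have := hsafe X hXV₂ ha
      rw [card_erase_of_mem ha]
      omega
    · rwa [erase_eq_of_notMem ha]
  both X hX hXV₁ hXV₂ := by
    rw [entering_erase_of_notMem fun ha => notMem_erase a.2 V₁ (hXV₁ ha)]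
    exact h.both X hX (hXV₁.trans (erase_subset _ _)) hXV₂

lemma CutCondition.exists_erase (h : CutCondition A V₁ V₂) (hV₁ : V₁.Nonempty) :
    ∃ a ∈ entering A V₁, CutCondition (A.erase a) (V₁.erase a.2) V₂ :=
  let ⟨a, ha, hsafe⟩ := h.exists_safe_arc hV₁
  ⟨a, ha, h.erase hsafe⟩

end CutCondition

/-- Such an `F` is a branching covering `W` with all roots outside `W`: a cycle of `F` would
span a subset of `W` that no arc of `F` enters. -/
structure IsBranchingInto (A : Finset (V × V)) (W : Finset V) (F : Finset (V × V)) : Prop where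
  subset : F ⊆ A
  head_mem : ∀ a ∈ F, a.2 ∈ W
  inDeg_le_one : ∀ v, inDeg F v ≤ 1
  entering_nonempty : ∀ X : Finset V, X.Nonempty → X ⊆ W → (entering F X).Nonempty

namespace IsBranchingInto

variable {A F : Finset (V × V)} {W : Finset V}

lemma empty (A : Finset (V × V)) : IsBranchingInto A ∅ ∅ where
  subset := empty_subset A
  head_mem _ h := absurd h (notMem_empty _)
  inDeg_le_one _ := by simp [inDeg]
  entering_nonempty _ hX hXW := absurd (subset_empty.1 hXW ▸ hX) Finset.not_nonempty_empty

lemma mono (hF : IsBranchingInto A W F) {A' : Finset (V × V)} (h : A ⊆ A') :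
    IsBranchingInto A' W F :=
  { hF with subset := hF.subset.trans h }

lemma insert {a : V × V} (hF : IsBranchingInto (A.erase a) (W.erase a.2) F)
    (ha : a ∈ entering A W) : IsBranchingInto A W (insert a F) where
  subset := insert_subset (mem_filter.1 ha).1 (hF.subset.trans (erase_subset _ _))
  head_mem e he := by
    rcases mem_insert.1 he with rfl | he
    · exact (mem_filter.1 ha).2.1
    · exact mem_of_mem_erase (hF.head_mem e he)
  inDeg_le_one v := by
    rw [inDeg, filter_insert]
    split_ifs with hv
    · rw [filter_eq_empty_iff.2 fun e he (hev : e.2 = v) =>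
        (mem_erase.1 (hF.head_mem e he)).1 (hev.trans hv.symm)]
      simp
    · exact hF.inDeg_le_one v
  entering_nonempty X hX hXW := by
    by_cases haX : a.2 ∈ X
    · exact ⟨a, mem_filter.2 ⟨mem_insert_self _ _, haX, fun h => (mem_filter.1 ha).2.2 (hXW h)⟩⟩
    · refine (hF.entering_nonempty X hX fun v hv => ?_).mono (entering_mono (subset_insert _ _) X)
      exact mem_erase.2 ⟨ne_of_mem_of_not_mem hv haX, hXW hv⟩

lemma inDeg_le (hF : IsBranchingInto A W F) {c : V → ℕ} (hc : ∀ v ∈ W, 0 < c v) (v : V) :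
    inDeg F v ≤ c v := by
  by_cases hv : v ∈ W
  · exact (hF.inDeg_le_one v).trans (hc v hv)
  · have : inDeg F v = 0 :=
      card_eq_zero.2 (filter_eq_empty_iff.2 fun a ha hav => hv (hav ▸ hF.head_mem a ha))
    omega

end IsBranchingInto

theorem CutCondition.exists_disjoint_isBranchingInto {A : Finset (V × V)} {V₁ V₂ : Finset V}
    (h : CutCondition A V₁ V₂) :
    ∃ F₁ F₂, Disjoint F₁ F₂ ∧ IsBranchingInto A V₁ F₁ ∧ IsBranchingInto A V₂ F₂ := by
  rcases V₁.eq_empty_or_nonempty with rfl | hV₁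
  · rcases V₂.eq_empty_or_nonempty with rfl | hV₂
    · exact ⟨∅, ∅, disjoint_empty_left _, .empty A, .empty A⟩
    · obtain ⟨a, ha, h'⟩ := h.symm.exists_erase hV₂
      have : #(V₂.erase a.2) < #V₂ := card_erase_lt_of_mem (mem_filter.1 ha).2.1
      obtain ⟨F₁, F₂, hF, hF₁, hF₂⟩ := h'.symm.exists_disjoint_isBranchingInto
      refine ⟨F₁, insert a F₂, ?_, hF₁.mono (erase_subset _ _), hF₂.insert ha⟩
      exact disjoint_insert_right.2 ⟨fun h => notMem_erase a A (hF₁.subset h), hF⟩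
  · obtain ⟨a, ha, h'⟩ := h.exists_erase hV₁
    have : #(V₁.erase a.2) < #V₁ := card_erase_lt_of_mem (mem_filter.1 ha).2.1
    obtain ⟨F₁, F₂, hF, hF₁, hF₂⟩ := h'.exists_disjoint_isBranchingInto
    refine ⟨insert a F₁, F₂, ?_, hF₁.insert ha, hF₂.mono (erase_subset _ _)⟩
    exact disjoint_insert_left.2 ⟨fun h => notMem_erase a A (hF₂.subset h), hF⟩
termination_by #V₁ + #V₂

lemma IsBranchingInto.isBBranching_of_subset {A F B : Finset (V × V)} {W : Finset V}
    {b : V → ℕ} (hF : IsBranchingInto A W F) (hFB : F ⊆ B) (hBA : B ⊆ A)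
    (hdeg : ∀ v, inDeg B v ≤ b v) (hW : ∀ v, inDeg B v = b v → v ∈ W) : IsBBranching A b B :=
  isBBranching_of_entering_nonempty hBA hdeg fun X hX htight =>
    (hF.entering_nonempty X hX fun v hv => hW v (htight v hv)).mono (entering_mono hFB X)

lemma exists_inDeg_eq_of_subset_of_disjoint {A F₁ F₂ : Finset (V × V)} {c₁ c₂ : V → ℕ}
    (hF₁ : F₁ ⊆ A) (hF₂ : F₂ ⊆ A) (hF : Disjoint F₁ F₂)
    (h₁ : ∀ v, inDeg F₁ v ≤ c₁ v) (h₂ : ∀ v, inDeg F₂ v ≤ c₂ v)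
    (hc : ∀ v, c₁ v + c₂ v = inDeg A v) :
    ∃ B ⊆ A, F₁ ⊆ B ∧ Disjoint B F₂ ∧ ∀ v, inDeg B v = c₁ v := by
  have hfiber : ∀ v, ∃ S, F₁.filter (·.2 = v) ⊆ S ∧ S ⊆ (A \ F₂).filter (·.2 = v) ∧ #S = c₁ v := by
    intro v
    refine exists_subsuperset_card_eq (filter_subset_filter _ (subset_sdiff.2 ⟨hF₁, hF⟩)) (h₁ v) ?_
    rw [← inDeg, inDeg_sdiff hF₂]
    have := h₂ v
    have := hc v
    omega
  choose S hF₁S hSA hS using hfiber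
  have hSmem : ∀ {a v}, a ∈ S v → a ∈ A \ F₂ ∧ a.2 = v := fun ha => mem_filter.1 (hSA _ ha)
  refine ⟨A.filter fun a => a ∈ S a.2, filter_subset _ _,
    fun a ha => mem_filter.2 ⟨hF₁ ha, hF₁S _ (mem_filter.2 ⟨ha, rfl⟩)⟩,
    disjoint_left.2 fun a ha => (mem_sdiff.1 (hSmem (mem_filter.1 ha).2).1).2, fun v => ?_⟩
  rw [inDeg, ← hS v, filter_filter]
  congr 1
  ext a
  simp only [mem_filter]
  exact ⟨fun ⟨_, haS, hav⟩ => hav ▸ haS,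
    fun haS => ⟨mem_sdiff.1 (hSmem haS).1 |>.1, (hSmem haS).2 ▸ haS, (hSmem haS).2⟩⟩

lemma cutCondition_of_isSourceComponent [Fintype V] {A B₁ B₂ : Finset (V × V)}
    {b b₁ b₂ : V → ℕ} (hb : ∀ v, 0 < b v) (hB₁ : IsBBranching A b B₁)
    (hB₂ : IsBBranching A b B₂) (hB : Disjoint B₁ B₂) (hA : B₁ ∪ B₂ = A)
    (hsum : ∀ v, b₁ v + b₂ v = inDeg A v)
    (hsrc : ∀ X, IsSourceComponent A X →
      ∑ v ∈ X, b₁ v < ∑ v ∈ X, b v ∧ ∑ v ∈ X, b₂ v < ∑ v ∈ X, b v) :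
    CutCondition A (univ.filter fun v => b₁ v = b v) (univ.filter fun v => b₂ v = b v) where
  left X hX hXV := card_pos.2 <| entering_nonempty_of_forall_isSourceComponent
    (fun S hS => (hsrc S hS).1) hX fun v hv => (mem_filter.1 (hXV hv)).2
  right X hX hXV := card_pos.2 <| entering_nonempty_of_forall_isSourceComponent
    (fun S hS => (hsrc S hS).2) hX fun v hv => (mem_filter.1 (hXV hv)).2
  both X hX hXV₁ hXV₂ := two_le_card_entering hB₁ hB₂ hB hA (sum_pos (fun v _ => hb v) hX)
    fun v hv => by rw [← hsum, (mem_filter.1 (hXV₁ hv)).2, (mem_filter.1 (hXV₂ hv)).2, two_mul]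

/-- Suppose `A` is partitioned into two `b`-branchings, and
`b₁', b₂' ≤ b` with `b₁' + b₂' = d⁻_A`. Then `A` can be partitioned into two
`b`-branchings with indegree vectors `b₁'` and `b₂'` iff `b₁'(X) < b(X)` and
`b₂'(X) < b(X)` for every source component `X`. -/
theorem bBranching_partition_prescribed_indegrees
    {V : Type*} [Fintype V] (A : Finset (V × V)) (b : V → ℕ) (hb : ∀ v, 0 < b v)
    (hpart : ∃ B₁ B₂ : Finset (V × V),
      IsBBranching A b B₁ ∧ IsBBranching A b B₂ ∧ Disjoint B₁ B₂ ∧ B₁ ∪ B₂ = A)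
    (b₁' b₂' : V → ℕ)
    (hb₁ : ∀ v, b₁' v ≤ b v) (hb₂ : ∀ v, b₂' v ≤ b v)
    (hsum : ∀ v, b₁' v + b₂' v = inDeg A v) :
    (∃ B₁' B₂' : Finset (V × V),
      IsBBranching A b B₁' ∧ IsBBranching A b B₂' ∧ Disjoint B₁' B₂' ∧
      B₁' ∪ B₂' = A ∧ (∀ v, inDeg B₁' v = b₁' v) ∧ ∀ v, inDeg B₂' v = b₂' v) ↔
    ∀ X : Finset V, IsSourceComponent A X →
      (∑ v ∈ X, b₁' v) < (∑ v ∈ X, b v) ∧ (∑ v ∈ X, b₂' v) < (∑ v ∈ X, b v) := by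
  constructor
  · rintro ⟨B₁, B₂, hB₁, hB₂, -, -, hdeg₁, hdeg₂⟩ X hX
    have hbX : 0 < ∑ v ∈ X, b v := sum_pos (fun v _ => hb v) hX.nonempty
    simp only [← hdeg₁, ← hdeg₂]
    exact ⟨hB₁.sum_inDeg_lt hX.2 hbX, hB₂.sum_inDeg_lt hX.2 hbX⟩
  · intro hsrc
    obtain ⟨B₁, B₂, hB₁, hB₂, hB, hA⟩ := hpart
    obtain ⟨F₁, F₂, hF, hF₁, hF₂⟩ :=
      (cutCondition_of_isSourceComponent hb hB₁ hB₂ hB hA hsum hsrc).exists_disjoint_isBranchingInto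
    have hpos : ∀ c : V → ℕ, ∀ v ∈ univ.filter fun v => c v = b v, 0 < c v :=
      fun c v hv => (mem_filter.1 hv).2 ▸ hb v
    obtain ⟨B, hBA, hF₁B, hBF₂, hdeg₁⟩ := exists_inDeg_eq_of_subset_of_disjoint hF₁.subset
      hF₂.subset hF (hF₁.inDeg_le (hpos b₁')) (hF₂.inDeg_le (hpos b₂')) hsum
    have hdeg₂ : ∀ v, inDeg (A \ B) v = b₂' v := fun v => by
      rw [inDeg_sdiff hBA, hdeg₁, ← hsum]
      omega
    refine ⟨B, A \ B,
      hF₁.isBBranching_of_subset hF₁B hBA (fun v => hdeg₁ v ▸ hb₁ v) fun v h => ?_,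
      hF₂.isBBranching_of_subset (subset_sdiff.2 ⟨hF₂.subset, hBF₂.symm⟩) sdiff_subset
        (fun v => hdeg₂ v ▸ hb₂ v) fun v h => ?_,
      disjoint_sdiff, union_sdiff_of_subset hBA, hdeg₁, hdeg₂⟩
    · simpa [hdeg₁] using h
    · simpa [hdeg₂] using h
end
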